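/- arXiv:1609.09823 — 5 statements merged into one kernel-verified Lean document; each statement's English description precedes it below -/
import Mathlib

section
/- For any K×K nonnegative integer matrix S whose row sums and column sums all equal N/K, and any index k, the achievable scheme rate ∑_{i<j} max(S_{i,j}, S_{j,i}) - ∑_{j≠k} Ω_{k,j} is at most ∑_{i=1}^{K-1} ∑_{j=1}^{K} S_{σ_i, σ_j} for any permutation σ with σ_K = k, and hence at most ((K-1)/K)·N. -/
open Finset

/-- The leftover index `Ω i j = S i j - min (S i j) (S j i)`. -/
def leftover {K : ℕ} (S : Fin K → Fin K → ℕ) (i j : Fin K) : ℕ :=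
  S i j - min (S i j) (S j i)

/-- For a `K×K` (here `K = n+1 ≥ 1`) nonnegative integer matrix `S`
with all row and column sums equal to `N/K`, and any index `k`, the achievable
rate `∑_{i<j} max(S_{i,j},S_{j,i}) - ∑_{j≠k} Ω_{k,j}` is at most
`∑_{i=1}^{K-1} ∑_{j=1}^{K} S_{σ_i,σ_j}` for any permutation `σ` with `σ_K = k`,
and hence at most `((K-1)/K)·N`. -/
theorem stmt6 (n N : ℕ) (hdvd : (n + 1) ∣ N)
    (S : Fin (n + 1) → Fin (n + 1) → ℕ)
    (hrow : ∀ i, ∑ j, S i j = N / (n + 1))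
    (hcol : ∀ j, ∑ i, S i j = N / (n + 1))
    (k : Fin (n + 1)) (σ : Equiv.Perm (Fin (n + 1))) (hσ : σ (Fin.last n) = k) :
    ((∑ i : Fin (n + 1), ∑ j ∈ Finset.univ.filter (fun j => i < j), max (S i j) (S j i)) -
        ∑ j ∈ Finset.univ.filter (fun j => j ≠ k), leftover S k j ≤
      ∑ i ∈ Finset.univ.filter (fun i => i ≠ Fin.last n),
        ∑ j : Fin (n + 1), S (σ i) (σ j)) ∧
    (∑ i ∈ Finset.univ.filter (fun i => i ≠ Fin.last n),
        ∑ j : Fin (n + 1), S (σ i) (σ j)) ≤ n * (N / (n + 1)) := by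
  set M := N / (n + 1) with hM
  have hinner : ∀ i : Fin (n + 1), ∑ j, S (σ i) (σ j) = M := by
    intro i
    rw [Equiv.sum_comp σ (fun j => S (σ i) j)]
    exact hrow _
  have hRHS : (∑ i ∈ Finset.univ.filter (fun i => i ≠ Fin.last n),
      ∑ j : Fin (n + 1), S (σ i) (σ j)) = n * M := by
    rw [Finset.sum_congr rfl (fun i _ => hinner i), Finset.sum_const, smul_eq_mul]
    congr 1
    rw [Finset.filter_ne', Finset.card_erase_of_mem (Finset.mem_univ _), Finset.card_univ,
      Fintype.card_fin]
    omega
  set A := ∑ i : Fin (n + 1), ∑ j ∈ Finset.univ.filter (fun j => i < j), max (S i j) (S j i)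
    with hA
  set B := ∑ i : Fin (n + 1), ∑ j ∈ Finset.univ.filter (fun j => i < j),
    min (S i j) (S j i) with hB
  set C := ∑ j ∈ Finset.univ.filter (fun j => j ≠ k), min (S k j) (S j k) with hC
  set D := ∑ j ∈ Finset.univ.filter (fun j => j ≠ k), leftover S k j with hD
  set E := ∑ i : Fin (n + 1), ∑ j ∈ Finset.univ.filter (fun j => j ≠ i), S i j with hE
  set F := ∑ i : Fin (n + 1), S i i with hF
  -- each row: off-diagonal part plus diagonal is M
  have hrowsplit : ∀ i : Fin (n + 1),
      (∑ j ∈ Finset.univ.filter (fun j => j ≠ i), S i j) + S i i = M := by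
    intro i
    rw [Finset.filter_ne', Finset.sum_erase_add _ _ (Finset.mem_univ i)]
    exact hrow i
  have hEF : E + F = n * M + M := by
    rw [hE, hF, ← Finset.sum_add_distrib]
    rw [Finset.sum_congr rfl (fun i _ => hrowsplit i), Finset.sum_const, Finset.card_univ,
      Fintype.card_fin, smul_eq_mul]
    ring
  have hSkk : S k k ≤ F := by
    rw [hF]
    exact Finset.single_le_sum (f := fun i => S i i) (fun i _ => Nat.zero_le _) (Finset.mem_univ k)
  have hDC : D + C + S k k = M := by
    rw [hD, hC, ← Finset.sum_add_distrib]
    have : ∀ j ∈ Finset.univ.filter (fun j => j ≠ k),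
        leftover S k j + min (S k j) (S j k) = S k j := by
      intro j _
      exact Nat.sub_add_cancel (min_le_left _ _)
    rw [Finset.sum_congr rfl this]
    rw [← hrowsplit k]
  -- swap lemma
  have swap : (∑ i : Fin (n + 1), ∑ j : Fin (n + 1), if i < j then S j i else 0)
      = ∑ i : Fin (n + 1), ∑ j : Fin (n + 1), if j < i then S i j else 0 := by
    rw [Finset.sum_comm]
  have hAB : A + B = E := by
    rw [hA, hB, hE, ← Finset.sum_add_distrib]
    simp only [Finset.sum_filter]
    calc
      ∑ i : Fin (n + 1), ((∑ j, if i < j then max (S i j) (S j i) else 0) +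
          ∑ j, if i < j then min (S i j) (S j i) else 0)
          = ∑ i : Fin (n + 1), ∑ j : Fin (n + 1),
              ((if i < j then S i j else 0) + (if i < j then S j i else 0)) := by
            refine Finset.sum_congr rfl fun i _ => ?_
            rw [← Finset.sum_add_distrib]
            refine Finset.sum_congr rfl fun j _ => ?_
            by_cases h : i < j <;> simp [h, max_add_min]
      _ = (∑ i : Fin (n + 1), ∑ j : Fin (n + 1), if i < j then S i j else 0) +
            ∑ i : Fin (n + 1), ∑ j : Fin (n + 1), if i < j then S j i else 0 := by
            simp only [Finset.sum_add_distrib]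
      _ = (∑ i : Fin (n + 1), ∑ j : Fin (n + 1), if i < j then S i j else 0) +
            ∑ i : Fin (n + 1), ∑ j : Fin (n + 1), if j < i then S i j else 0 := by rw [swap]
      _ = ∑ i : Fin (n + 1), ∑ j : Fin (n + 1), if j ≠ i then S i j else 0 := by
            rw [← Finset.sum_add_distrib]
            refine Finset.sum_congr rfl fun i _ => ?_
            rw [← Finset.sum_add_distrib]
            refine Finset.sum_congr rfl fun j _ => ?_
            rcases lt_trichotomy i j with h | h | h
            · simp [h, h.ne', not_lt_of_gt h]
            · simp [h]
            · simp [h, h.ne, not_lt_of_gt h]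
  have hCB : C ≤ B := by
    rw [hC, hB]
    simp only [Finset.sum_filter]
    have split : (∑ j : Fin (n + 1), if j ≠ k then min (S k j) (S j k) else 0)
        = (∑ j : Fin (n + 1), if k < j then min (S k j) (S j k) else 0) +
          ∑ j : Fin (n + 1), if j < k then min (S j k) (S k j) else 0 := by
      rw [← Finset.sum_add_distrib]
      refine Finset.sum_congr rfl fun j _ => ?_
      rcases lt_trichotomy j k with h | h | h
      · simp [h, h.ne, not_lt_of_gt h, min_comm]
      · simp [h]
      · simp [h, h.ne', not_lt_of_gt h]
    rw [split]
    have h1 : (∑ j : Fin (n + 1), if k < j then min (S k j) (S j k) else 0)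
        = ∑ i : Fin (n + 1), if i = k then (∑ j : Fin (n + 1),
            if i < j then min (S i j) (S j i) else 0) else 0 := by
      rw [Finset.sum_ite_eq' Finset.univ k]
      simp
    have h2 : (∑ j : Fin (n + 1), if j < k then min (S j k) (S k j) else 0)
        = ∑ i : Fin (n + 1), ∑ j : Fin (n + 1),
            if j = k ∧ i < j then min (S i j) (S j i) else 0 := by
      refine Finset.sum_congr rfl fun i _ => ?_
      have : ∀ j : Fin (n + 1), (if j = k ∧ i < j then min (S i j) (S j i) else 0)
          = if j = k then (if i < j then min (S i j) (S j i) else 0) else 0 := by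
        intro j
        by_cases hj : j = k <;> simp [hj]
      rw [Finset.sum_congr rfl fun j _ => this j, Finset.sum_ite_eq' Finset.univ k]
      simp
    rw [h1, h2, ← Finset.sum_add_distrib]
    refine Finset.sum_le_sum fun i _ => ?_
    have : (if i = k then (∑ j : Fin (n + 1), if i < j then min (S i j) (S j i) else 0) else 0) +
        (∑ j : Fin (n + 1), if j = k ∧ i < j then min (S i j) (S j i) else 0)
        = ∑ j : Fin (n + 1), ((if i = k ∧ i < j then min (S i j) (S j i) else 0) +
            if j = k ∧ i < j then min (S i j) (S j i) else 0) := by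
      rw [Finset.sum_add_distrib]
      congr 1
      by_cases hi : i = k <;> simp [hi]
    rw [this]
    refine Finset.sum_le_sum fun j _ => ?_
    by_cases hi : i = k <;> by_cases hj : j = k <;> by_cases hij : i < j <;>
      simp [hi, hj, hij] <;> omega
  have key : A - D ≤ n * M := by omega
  constructor
  · rw [hRHS]; exact key
  · exact le_of_eq hRHS
end

section
/- The worst-case achievable rate bound is tight at ((K-1)/K)·N: the cyclic shuffle matrix S defined by S_{i, i+1 mod K} = N/K and S_{i,j}=0 otherwise satisfies ∑_{i<j, using the identity ordering} S_{σ_i,σ_j} = ((K-1)/K)·N for the permutation σ = identity, while also having all row and column sums equal to N/K. -/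
open Finset

/-- For `K = n+2 ≥ 2` and `K ∣ N`, the cyclic shuffle matrix
`S i j = N/K` if `j = i+1 (mod K)` and `0` otherwise has all row and column sums
equal to `N/K`, and the lower-bound expression for the identity permutation
`∑_{i=1}^{K-1} ∑_{j=i+1}^{K} S_{i,j}` equals `((K-1)/K)·N = (K-1)·(N/K)`. -/
theorem stmt7 (n N : ℕ) (hdvd : (n + 2) ∣ N)
    (S : Fin (n + 2) → Fin (n + 2) → ℕ)
    (hS : ∀ i j : Fin (n + 2), S i j = if j = i + 1 then N / (n + 2) else 0) :
    (∀ i, ∑ j, S i j = N / (n + 2)) ∧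
    (∀ j, ∑ i, S i j = N / (n + 2)) ∧
    (∑ i : Fin (n + 2), ∑ j ∈ Finset.univ.filter (fun j => i < j), S i j) =
      (n + 1) * (N / (n + 2)) := by
  refine ⟨?_, ?_, ?_⟩
  · intro i
    simp only [hS]
    rw [Finset.sum_ite_eq' Finset.univ (i + 1) (fun _ => N / (n + 2))]
    simp
  · intro j
    simp only [hS]
    have h : ∀ i : Fin (n + 2), (j = i + 1) ↔ (i = j - 1) := by
      intro i
      constructor
      · intro h; subst h; simp
      · intro h; subst h; simp
    simp only [h]
    rw [Finset.sum_ite_eq' Finset.univ (j - 1) (fun _ => N / (n + 2))]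
    simp
  · have hinner : ∀ i : Fin (n + 2),
        (∑ j ∈ Finset.univ.filter (fun j => i < j), S i j)
          = if i < i + 1 then N / (n + 2) else 0 := by
      intro i
      simp only [hS]
      rw [Finset.sum_ite_eq' (Finset.univ.filter (fun j => i < j)) (i + 1)
        (fun _ => N / (n + 2))]
      simp only [Finset.mem_filter, Finset.mem_univ, true_and]
    simp only [hinner]
    have hcond : ∀ i : Fin (n + 2), (i < i + 1) ↔ i ≠ Fin.last (n + 1) := by
      intro i
      constructor
      · intro h hlast
        subst hlast
        rw [Fin.last_add_one] at h
        exact absurd h (Fin.not_lt_zero _)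
      · intro h
        have : i.val < n + 1 := by
          rcases Fin.lt_or_eq_of_le (Fin.le_last i) with h' | h'
          · exact h'
          · exact absurd h' h
        have hm : (i.val + 1) % (n + 2) = i.val + 1 := Nat.mod_eq_of_lt (by omega)
        rw [Fin.lt_def, Fin.add_def]
        simp only [Fin.val_one]
        omega
    simp only [hcond]
    rw [Finset.sum_ite, Finset.sum_const, Finset.sum_const]
    simp only [smul_eq_mul, mul_zero, add_zero]
    congr 1
    rw [Finset.filter_ne' Finset.univ (Fin.last (n + 1))]
    simp
end

section
/- For any K×K nonnegative integer matrix S with equal row and column sums c for every index (row sum i = column sum i = c), the upper bound rate ∑_{i<j} max(S_{i,j},S_{j,i}) - max_k ∑_{j≠k} Ω_{k,j} is at least the lower bound ∑_{i<j} S_{σ_i,σ_j} for every permutation σ. -/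
open Finset

section Aux

variable {K : ℕ}

lemma aux_swap_lt (f : Fin K → Fin K → ℕ) :
    (∑ i, ∑ j ∈ Finset.univ.filter (fun j => j < i), f i j)
      = ∑ i, ∑ j ∈ Finset.univ.filter (fun j => i < j), f j i := by
  rw [Finset.sum_comm' (t' := Finset.univ)
    (s' := fun j => Finset.univ.filter (fun i => j < i))]
  intro x y
  simp

lemma aux_split_square (h : Fin K → Fin K → ℕ) :
    ∑ i, ∑ j, h i j
      = (∑ i, ∑ j ∈ Finset.univ.filter (fun j => i < j), h i j)
        + (∑ i, ∑ j ∈ Finset.univ.filter (fun j => j < i), h i j)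
        + ∑ i, h i i := by
  have key : ∀ i : Fin K, ∑ j, h i j
      = (∑ j ∈ Finset.univ.filter (fun j => i < j), h i j)
        + ((∑ j ∈ Finset.univ.filter (fun j => j < i), h i j) + h i i) := by
    intro i
    rw [← Finset.sum_filter_add_sum_filter_not Finset.univ (fun j => i < j)]
    congr 1
    have hins : Finset.univ.filter (fun j => ¬ i < j)
        = insert i (Finset.univ.filter (fun j : Fin K => j < i)) := by
      ext j
      simp only [Finset.mem_filter, Finset.mem_univ, true_and, Finset.mem_insert]
      omega
    rw [hins, Finset.sum_insert (by simp)]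
    ring
  calc ∑ i, ∑ j, h i j
      = ∑ i, ((∑ j ∈ Finset.univ.filter (fun j => i < j), h i j)
        + ((∑ j ∈ Finset.univ.filter (fun j => j < i), h i j) + h i i)) :=
        Finset.sum_congr rfl (fun i _ => key i)
    _ = _ := by rw [Finset.sum_add_distrib, Finset.sum_add_distrib]; ring

lemma aux_sum_pairs_perm (g : Fin K → Fin K → ℕ) (hg : ∀ i j, g i j = g j i)
    (σ : Equiv.Perm (Fin K)) :
    (∑ i, ∑ j ∈ Finset.univ.filter (fun j => i < j), g i j)
      = ∑ i, ∑ j ∈ Finset.univ.filter (fun j => i < j), g (σ i) (σ j) := by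
  have hlow : ∀ (g' : Fin K → Fin K → ℕ), (∀ i j, g' i j = g' j i) →
      (∑ i, ∑ j ∈ Finset.univ.filter (fun j => j < i), g' i j)
        = ∑ i, ∑ j ∈ Finset.univ.filter (fun j => i < j), g' i j := by
    intro g' hg'
    rw [aux_swap_lt]
    exact Finset.sum_congr rfl fun i _ => Finset.sum_congr rfl fun j _ => hg' j i
  have h1 := aux_split_square g
  have h2 := aux_split_square (fun i j => g (σ i) (σ j))
  rw [hlow g hg] at h1
  rw [hlow (fun i j => g (σ i) (σ j)) (fun i j => hg _ _)] at h2
  have hfull : (∑ i, ∑ j, g (σ i) (σ j)) = ∑ i, ∑ j, g i j := by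
    rw [Equiv.sum_comp σ (fun i => ∑ j, g i (σ j))]
    exact Finset.sum_congr rfl fun i _ => Equiv.sum_comp σ (g i)
  have hdiag : (∑ i, g (σ i) (σ i)) = ∑ i, g i i :=
    Equiv.sum_comp σ (fun i => g i i)
  simp only [hfull, hdiag] at h2
  omega

lemma aux_cut_bound (T : Fin K → Fin K → ℕ) (hT0 : ∀ i, T i i = 0)
    (hTs : ∀ i, ∑ j, T i j = ∑ j, T j i) (p : Fin K) :
    ∑ j, T p j ≤ ∑ i, ∑ j ∈ Finset.univ.filter (fun j => j < i), T i j := by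
  classical
  set P : Finset (Fin K) := Finset.univ.filter (fun i => i ≤ p) with hP
  set Q : Finset (Fin K) := Finset.univ.filter (fun i => ¬ i ≤ p) with hQ
  have hPsplit : ∀ f : Fin K → ℕ, ∑ j, f j = ∑ j ∈ P, f j + ∑ j ∈ Q, f j := by
    intro f
    rw [hP, hQ]
    exact (Finset.sum_filter_add_sum_filter_not Finset.univ _ f).symm
  -- cut identity
  have e1 : ∑ i ∈ P, ∑ j, T i j
      = (∑ i ∈ P, ∑ j ∈ P, T i j) + ∑ i ∈ P, ∑ j ∈ Q, T i j := by
    rw [← Finset.sum_add_distrib]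
    exact Finset.sum_congr rfl fun i _ => hPsplit (T i)
  have e2 : ∑ i ∈ P, ∑ j, T j i
      = (∑ i ∈ P, ∑ j ∈ P, T i j) + ∑ i ∈ Q, ∑ j ∈ P, T i j := by
    rw [Finset.sum_comm]
    rw [hPsplit (fun j => ∑ i ∈ P, T j i)]
  have e3 : ∑ i ∈ P, ∑ j, T i j = ∑ i ∈ P, ∑ j, T j i :=
    Finset.sum_congr rfl fun i _ => hTs i
  have hcut : ∑ i ∈ P, ∑ j ∈ Q, T i j = ∑ i ∈ Q, ∑ j ∈ P, T i j := by omega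
  -- bounds
  have hpP : p ∈ P := by simp [hP]
  have hPp : ∑ j ∈ P, T p j = ∑ j ∈ Finset.univ.filter (fun j => j < p), T p j := by
    have hins : P = insert p (Finset.univ.filter (fun j : Fin K => j < p)) := by
      ext j
      simp only [hP, Finset.mem_filter, Finset.mem_univ, true_and, Finset.mem_insert]
      omega
    rw [hins, Finset.sum_insert (by simp), hT0 p]
    omega
  have hq : ∑ j ∈ Q, T p j ≤ ∑ i ∈ P, ∑ j ∈ Q, T i j :=
    Finset.single_le_sum (f := fun i => ∑ j ∈ Q, T i j)
      (fun i _ => Nat.zero_le _) hpP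
  have hY : ∑ i ∈ Q, ∑ j ∈ P, T i j
      ≤ ∑ i ∈ Q, ∑ j ∈ Finset.univ.filter (fun j => j < i), T i j := by
    apply Finset.sum_le_sum
    intro i hi
    apply Finset.sum_le_sum_of_subset
    intro j hj
    simp only [hP, hQ, Finset.mem_filter, Finset.mem_univ, true_and] at hj hi ⊢
    omega
  have hgp : (∑ j ∈ Finset.univ.filter (fun j => j < p), T p j)
      ≤ ∑ i ∈ P, ∑ j ∈ Finset.univ.filter (fun j => j < i), T i j :=
    Finset.single_le_sum (f := fun i => ∑ j ∈ Finset.univ.filter (fun j => j < i), T i j)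
      (fun i _ => Nat.zero_le _) hpP
  have hL : (∑ i, ∑ j ∈ Finset.univ.filter (fun j => j < i), T i j)
      = (∑ i ∈ P, ∑ j ∈ Finset.univ.filter (fun j => j < i), T i j)
        + ∑ i ∈ Q, ∑ j ∈ Finset.univ.filter (fun j => j < i), T i j :=
    hPsplit _
  have hsp : ∑ j, T p j = ∑ j ∈ P, T p j + ∑ j ∈ Q, T p j := hPsplit _
  omega

end Aux

/-- For any `K×K` (`K = n+1`) nonnegative integer matrix `S` with all
row and column sums equal to a common value `c`, the Theorem-1 upper bound rate
`∑_{i<j} max(S_{i,j},S_{j,i}) - max_k ∑_{j≠k} Ω_{k,j}` is at least the Theorem-2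
lower bound `∑_{i<j} S_{σ_i,σ_j}` for every permutation `σ`. -/
theorem stmt10 (n c : ℕ)
    (S : Fin (n + 1) → Fin (n + 1) → ℕ)
    (hrow : ∀ i, ∑ j, S i j = c)
    (hcol : ∀ j, ∑ i, S i j = c) :
    ∀ σ : Equiv.Perm (Fin (n + 1)),
      ((∑ i : Fin (n + 1), ∑ j ∈ Finset.univ.filter (fun j => i < j),
          max (S i j) (S j i) : ℤ) -
        ((Finset.univ.sup (fun k : Fin (n + 1) =>
          ∑ j ∈ Finset.univ.filter (fun j => j ≠ k), leftover S k j) : ℕ) : ℤ)) ≥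
      (∑ i : Fin (n + 1), ∑ j ∈ Finset.univ.filter (fun j => i < j), S (σ i) (σ j) : ℤ) := by
  intro σ
  have hpt : ∀ a b : Fin (n + 1), leftover S a b + min (S a b) (S b a) = S a b := by
    intro a b; unfold leftover; omega
  have hdiag0 : ∀ a : Fin (n + 1), leftover S a a = 0 := by
    intro a; unfold leftover; omega
  -- row sum of Ω = column sum of Ω
  have hΩ : ∀ i : Fin (n + 1), ∑ j, leftover S i j = ∑ j, leftover S j i := by
    intro i
    have h1 : (∑ j, leftover S i j) + ∑ j, min (S i j) (S j i) = c := by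
      rw [← Finset.sum_add_distrib, ← hrow i]
      exact Finset.sum_congr rfl fun j _ => hpt i j
    have h2 : (∑ j, leftover S j i) + ∑ j, min (S j i) (S i j) = c := by
      rw [← Finset.sum_add_distrib, ← hcol i]
      exact Finset.sum_congr rfl fun j _ => hpt j i
    have h3 : (∑ j, min (S i j) (S j i)) = ∑ j, min (S j i) (S i j) :=
      Finset.sum_congr rfl fun j _ => min_comm _ _
    omega
  -- the permuted leftover matrix
  set T : Fin (n + 1) → Fin (n + 1) → ℕ := fun i j => leftover S (σ i) (σ j) with hT
  have hT0 : ∀ i, T i i = 0 := fun i => hdiag0 (σ i)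
  have hTs : ∀ i, ∑ j, T i j = ∑ j, T j i := by
    intro i
    calc ∑ j, leftover S (σ i) (σ j)
        = ∑ j, leftover S (σ i) j := Equiv.sum_comp σ (leftover S (σ i))
      _ = ∑ j, leftover S j (σ i) := hΩ (σ i)
      _ = ∑ j, leftover S (σ j) (σ i) :=
        (Equiv.sum_comp σ (fun j => leftover S j (σ i))).symm
  set L : ℕ := ∑ i, ∑ j ∈ Finset.univ.filter (fun j => j < i), T i j with hLdef
  -- sup ≤ L
  have hsup : (Finset.univ.sup (fun k : Fin (n + 1) =>
      ∑ j ∈ Finset.univ.filter (fun j => j ≠ k), leftover S k j)) ≤ L := by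
    apply Finset.sup_le
    intro k _
    have hk : (∑ j ∈ Finset.univ.filter (fun j => j ≠ k), leftover S k j)
        = ∑ j, leftover S k j := by
      rw [← Finset.sum_filter_add_sum_filter_not Finset.univ (fun j => j ≠ k)
        (leftover S k)]
      have : Finset.univ.filter (fun j : Fin (n + 1) => ¬ j ≠ k) = {k} := by
        ext j; simp
      rw [this, Finset.sum_singleton, hdiag0 k]
      omega
    rw [hk]
    have hrk : (∑ j, leftover S k j) = ∑ j, T (σ.symm k) j := by
      rw [hT]
      simp only [Equiv.apply_symm_apply]
      exact (Equiv.sum_comp σ (leftover S k)).symm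
    rw [hrk]
    exact aux_cut_bound T hT0 hTs (σ.symm k)
  -- upper-bound sum = lower-bound sum + L
  have hmax : ∀ a b : Fin (n + 1), max (S a b) (S b a) = S a b + leftover S b a := by
    intro a b; unfold leftover; omega
  have hub : (∑ i, ∑ j ∈ Finset.univ.filter (fun j => i < j), max (S i j) (S j i))
      = (∑ i, ∑ j ∈ Finset.univ.filter (fun j => i < j), S (σ i) (σ j)) + L := by
    rw [aux_sum_pairs_perm (fun i j => max (S i j) (S j i))
      (fun i j => max_comm _ _) σ]
    have step : ∀ i : Fin (n + 1),
        (∑ j ∈ Finset.univ.filter (fun j => i < j), max (S (σ i) (σ j)) (S (σ j) (σ i)))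
          = (∑ j ∈ Finset.univ.filter (fun j => i < j), S (σ i) (σ j))
            + ∑ j ∈ Finset.univ.filter (fun j => i < j), T j i := by
      intro i
      rw [← Finset.sum_add_distrib]
      exact Finset.sum_congr rfl fun j _ => hmax (σ i) (σ j)
    calc (∑ i, ∑ j ∈ Finset.univ.filter (fun j => i < j),
            max (S (σ i) (σ j)) (S (σ j) (σ i)))
        = ∑ i, ((∑ j ∈ Finset.univ.filter (fun j => i < j), S (σ i) (σ j))
            + ∑ j ∈ Finset.univ.filter (fun j => i < j), T j i) :=
          Finset.sum_congr rfl fun i _ => step i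
      _ = (∑ i, ∑ j ∈ Finset.univ.filter (fun j => i < j), S (σ i) (σ j))
            + ∑ i, ∑ j ∈ Finset.univ.filter (fun j => i < j), T j i :=
          Finset.sum_add_distrib
      _ = _ := by rw [hLdef, aux_swap_lt T]
  have key : (∑ i, ∑ j ∈ Finset.univ.filter (fun j => i < j), S (σ i) (σ j))
      + (Finset.univ.sup (fun k : Fin (n + 1) =>
          ∑ j ∈ Finset.univ.filter (fun j => j ≠ k), leftover S k j))
      ≤ ∑ i, ∑ j ∈ Finset.univ.filter (fun j => i < j), max (S i j) (S j i) := by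
    omega
  have key' := key
  zify at key'
  linarith
end

section
/- Let X be a random variable that is a deterministic function of A, where H(A) = N·d, and suppose {A_1^t,...,A_K^t} and {A_1^{t+1},...,A_K^{t+1}} are deterministic functions of A, each with entropy (N/K)·d, satisfying the decodability constraint H(A_k^{t+1} | A_k^t, X) = 0 for all k. Then H(X) ≥ ∑_{i=1}^{K-1} ∑_{j=i+1}^{K} I(A_{σ_i}^t ; A_{σ_j}^{t+1}) for any permutation σ, assuming the mutual informations decompose additively as I(A_{σ_i}^t; A_{σ_{i+1}}^{t+1},...,A_{σ_K}^{t+1}) = ∑_{j>i} I(A_{σ_i}^t; A_{σ_j}^{t+1}). -/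
open Finset

noncomputable def ent {Ω : Type*} [Fintype Ω] {α : Type*} [Fintype α] [DecidableEq α]
    (μ : Ω → ℝ) (X : Ω → α) : ℝ :=
  - ∑ a : α, (∑ ω ∈ Finset.univ.filter (fun ω => X ω = a), μ ω) *
      Real.log (∑ ω ∈ Finset.univ.filter (fun ω => X ω = a), μ ω)

noncomputable def pm {Ω : Type*} [Fintype Ω] {α : Type*} [Fintype α] [DecidableEq α]
    (μ : Ω → ℝ) (X : Ω → α) (a : α) : ℝ :=
  ∑ ω ∈ Finset.univ.filter (fun ω => X ω = a), μ ω

section Base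
variable {Ω : Type*} [Fintype Ω] {α β γ : Type*} [Fintype α] [DecidableEq α]
  [Fintype β] [DecidableEq β] [Fintype γ] [DecidableEq γ]
  (μ : Ω → ℝ)

lemma ent_eq (X : Ω → α) : ent μ X = ∑ a : α, Real.negMulLog (pm μ X a) := by
  simp [ent, pm, Real.negMulLog, Finset.sum_neg_distrib]

lemma pm_nonneg (hμ0 : ∀ ω, 0 ≤ μ ω) (X : Ω → α) (a : α) : 0 ≤ pm μ X a :=
  Finset.sum_nonneg fun ω _ => hμ0 ω

lemma sum_pm (hμ1 : ∑ ω, μ ω = 1) (X : Ω → α) : ∑ a : α, pm μ X a = 1 := by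
  rw [← hμ1]
  exact Finset.sum_fiberwise_of_maps_to (fun ω _ => Finset.mem_univ (X ω)) μ

lemma pm_le_one (hμ0 : ∀ ω, 0 ≤ μ ω) (hμ1 : ∑ ω, μ ω = 1) (X : Ω → α) (a : α) :
    pm μ X a ≤ 1 := by
  rw [← sum_pm μ hμ1 X]
  exact Finset.single_le_sum (fun b _ => pm_nonneg μ hμ0 X b) (Finset.mem_univ a)

lemma pm_comp (X : Ω → α) (g : α → β) (b : β) :
    pm μ (fun ω => g (X ω)) b = ∑ a ∈ Finset.univ.filter (fun a => g a = b), pm μ X a := by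
  unfold pm
  simp only [Finset.sum_filter]
  have : ∀ a : α, (if g a = b then ∑ ω : Ω, if X ω = a then μ ω else 0 else 0)
      = ∑ ω : Ω, if X ω = a then (if g a = b then μ ω else 0) else 0 := by
    intro a
    by_cases h : g a = b <;> simp [h]
  rw [Finset.sum_congr rfl (fun a _ => this a), Finset.sum_comm]
  refine Finset.sum_congr rfl fun ω _ => ?_
  rw [Finset.sum_eq_single (X ω)]
  · simp
  · intro a _ ha; simp [Ne.symm ha]
  · simp

lemma sum_pm_comp (X : Ω → α) (g : α → β) (F : β → ℝ) :
    ∑ a : α, pm μ X a * F (g a) = ∑ b : β, pm μ (fun ω => g (X ω)) b * F b := by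
  rw [← Finset.sum_fiberwise_of_maps_to (fun a (_ : a ∈ Finset.univ) => Finset.mem_univ (g a))
    (fun a => pm μ X a * F (g a))]
  refine Finset.sum_congr rfl fun b _ => ?_
  rw [pm_comp μ X g b, Finset.sum_mul]
  refine Finset.sum_congr rfl fun a ha => ?_
  rw [(Finset.mem_filter.mp ha).2]

lemma pm_le_pm_comp (hμ0 : ∀ ω, 0 ≤ μ ω) (X : Ω → α) (g : α → β) (a : α) :
    pm μ X a ≤ pm μ (fun ω => g (X ω)) (g a) := by
  rw [pm_comp μ X g (g a)]
  exact Finset.single_le_sum (f := fun c => pm μ X c) (fun c _ => pm_nonneg μ hμ0 X c)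
    (Finset.mem_filter.mpr ⟨Finset.mem_univ a, rfl⟩)

end Base

noncomputable def condEnt {Ω : Type*} [Fintype Ω] {α β : Type*}
    [Fintype α] [DecidableEq α] [Fintype β] [DecidableEq β]
    (μ : Ω → ℝ) (X : Ω → α) (Y : Ω → β) : ℝ :=
  ent μ (fun ω => (X ω, Y ω)) - ent μ Y

noncomputable def mutInfo {Ω : Type*} [Fintype Ω] {α β : Type*}
    [Fintype α] [DecidableEq α] [Fintype β] [DecidableEq β]
    (μ : Ω → ℝ) (X : Ω → α) (Y : Ω → β) : ℝ :=
  ent μ X + ent μ Y - ent μ (fun ω => (X ω, Y ω))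

section Ent
variable {Ω : Type*} [Fintype Ω] {α β γ δ : Type*} [Fintype α] [DecidableEq α]
  [Fintype β] [DecidableEq β] [Fintype γ] [DecidableEq γ] [Fintype δ] [DecidableEq δ]
  (μ : Ω → ℝ) (hμ0 : ∀ ω, 0 ≤ μ ω) (hμ1 : ∑ ω, μ ω = 1)

include hμ0 hμ1 in
lemma ent_nonneg (X : Ω → α) : 0 ≤ ent μ X := by
  rw [ent_eq]
  exact Finset.sum_nonneg fun a _ =>
    Real.negMulLog_nonneg (pm_nonneg μ hμ0 X a) (pm_le_one μ hμ0 hμ1 X a)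

include hμ0 in
lemma ent_comp_le (X : Ω → α) (g : α → β) :
    ent μ (fun ω => g (X ω)) ≤ ent μ X := by
  rw [ent_eq, ent_eq]
  simp only [Real.negMulLog]
  have h1 : ∑ b : β, -pm μ (fun ω => g (X ω)) b * Real.log (pm μ (fun ω => g (X ω)) b)
      = ∑ a : α, pm μ X a * (- Real.log (pm μ (fun ω => g (X ω)) (g a))) := by
    rw [sum_pm_comp μ X g (fun b => - Real.log (pm μ (fun ω => g (X ω)) b))]
    refine Finset.sum_congr rfl fun b _ => by ring
  rw [h1]
  refine Finset.sum_le_sum fun a _ => ?_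
  rcases eq_or_lt_of_le (pm_nonneg μ hμ0 X a) with h | h
  · simp [← h]
  · have hle := pm_le_pm_comp μ hμ0 X g a
    have := Real.log_le_log h hle
    nlinarith [this, h]

include hμ0 in
lemma ent_congr {X : Ω → α} {Y : Ω → β} (f : β → α) (g : α → β)
    (hf : ∀ ω, X ω = f (Y ω)) (hg : ∀ ω, Y ω = g (X ω)) : ent μ X = ent μ Y := by
  have h1 : ent μ X = ent μ (fun ω => f (Y ω)) := by
    congr 1; funext ω; exact hf ω
  have h2 : ent μ Y = ent μ (fun ω => g (X ω)) := by
    congr 1; funext ω; exact hg ω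
  have := ent_comp_le μ hμ0 Y f
  have := ent_comp_le μ hμ0 X g
  linarith

include hμ1 in
lemma ent_const (c : α) : ent μ (fun _ => c) = 0 := by
  rw [ent_eq]
  apply Finset.sum_eq_zero
  intro a _
  by_cases h : a = c
  · subst h
    have : pm μ (fun _ => a) a = 1 := by
      unfold pm; simpa using hμ1
    simp [this, Real.negMulLog]
  · have : pm μ (fun _ => c) a = 0 := by
      unfold pm
      rw [Finset.filter_false_of_mem, Finset.sum_empty]
      intro ω _; exact fun hc => h hc.symm
    simp [this]

end Ent

lemma logterm {q Qm py Pf : ℝ} (hq : 0 ≤ q) (h1 : q ≤ Qm) (h2 : q ≤ py) (h3 : py ≤ Pf) :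
    q * (Real.log Qm + Real.log py - Real.log q - Real.log Pf) ≤ Qm * py / Pf - q := by
  rcases eq_or_lt_of_le hq with h | h
  · rw [← h]
    have : 0 ≤ Qm * py / Pf := by
      apply div_nonneg
      · exact mul_nonneg (hq.trans h1) (hq.trans h2)
      · exact hq.trans (h2.trans h3)
    simpa using this
  · have hQm : 0 < Qm := lt_of_lt_of_le h h1
    have hpy : 0 < py := lt_of_lt_of_le h h2
    have hPf : 0 < Pf := lt_of_lt_of_le hpy h3
    have hlog : Real.log Qm + Real.log py - Real.log q - Real.log Pf
        = Real.log (Qm * py / (q * Pf)) := by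
      rw [Real.log_div (by positivity) (by positivity), Real.log_mul hQm.ne' hpy.ne',
        Real.log_mul h.ne' hPf.ne']
      ring
    rw [hlog]
    have hr : 0 < Qm * py / (q * Pf) := by positivity
    have hb := Real.log_le_sub_one_of_pos hr
    have heq : q * (Qm * py / (q * Pf) - 1) = Qm * py / Pf - q := by
      field_simp
    nlinarith [mul_le_mul_of_nonneg_left hb h.le]

section CondEnt
variable {Ω : Type*} [Fintype Ω] {α β γ δ : Type*} [Fintype α] [DecidableEq α]
  [Fintype β] [DecidableEq β] [Fintype γ] [DecidableEq γ] [Fintype δ] [DecidableEq δ]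
  (μ : Ω → ℝ) (hμ0 : ∀ ω, 0 ≤ μ ω) (hμ1 : ∑ ω, μ ω = 1)

lemma pm_fst_marg (U : Ω → α) (V : Ω → γ) (c : γ) :
    ∑ a : α, pm μ (fun ω => (U ω, V ω)) (a, c) = pm μ V c := by
  unfold pm
  simp only [Finset.sum_filter]
  rw [Finset.sum_comm]
  refine Finset.sum_congr rfl fun ω _ => ?_
  by_cases h : V ω = c
  · rw [Finset.sum_eq_single (U ω)]
    · simp [h]
    · intro a _ ha; simp [Prod.ext_iff, Ne.symm ha]
    · simp
  · simp [Prod.ext_iff, h]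

include hμ0 hμ1 in
lemma condEnt_comp_le (W : Ω → α) (Y : Ω → γ) (g : γ → δ) :
    condEnt μ W Y ≤ condEnt μ W (fun ω => g (Y ω)) := by
  set q : α × γ → ℝ := pm μ (fun ω => (W ω, Y ω)) with hq_def
  set pY : γ → ℝ := pm μ Y with hpY_def
  set P : δ → ℝ := pm μ (fun ω => g (Y ω)) with hP_def
  set Q : α × δ → ℝ := pm μ (fun ω => (W ω, g (Y ω))) with hQ_def
  set m : α × γ → α × δ := fun x => (x.1, g x.2) with hm_def
  have hq0 : ∀ x, 0 ≤ q x := fun x => pm_nonneg μ hμ0 _ x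
  have hqQ : ∀ x, q x ≤ Q (m x) := fun x =>
    pm_le_pm_comp μ hμ0 (fun ω => (W ω, Y ω)) m x
  have hqpY : ∀ x : α × γ, q x ≤ pY x.2 := fun x =>
    pm_le_pm_comp μ hμ0 (fun ω => (W ω, Y ω)) Prod.snd x
  have hpYP : ∀ c, pY c ≤ P (g c) := fun c => pm_le_pm_comp μ hμ0 Y g c
  have hP0 : ∀ d, 0 ≤ P d := fun d => pm_nonneg μ hμ0 _ d
  have hpY0 : ∀ c, 0 ≤ pY c := fun c => pm_nonneg μ hμ0 _ c
  have hQ0 : ∀ y, 0 ≤ Q y := fun y => pm_nonneg μ hμ0 _ y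
  have marg : ∀ d, ∑ a : α, Q (a, d) = P d := fun d =>
    pm_fst_marg μ W (fun ω => g (Y ω)) d
  -- sum identities
  have S1 : ∑ x : α × γ, q x * Real.log (pY x.2) = ∑ c : γ, pY c * Real.log (pY c) :=
    sum_pm_comp μ (fun ω => (W ω, Y ω)) Prod.snd (fun c => Real.log (pY c))
  have S2 : ∑ x : α × γ, q x * Real.log (Q (m x)) = ∑ y : α × δ, Q y * Real.log (Q y) :=
    sum_pm_comp μ (fun ω => (W ω, Y ω)) m (fun y => Real.log (Q y))
  have S3 : ∑ x : α × γ, q x * Real.log (P (g x.2)) = ∑ d : δ, P d * Real.log (P d) :=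
    sum_pm_comp μ (fun ω => (W ω, Y ω)) (fun x => g x.2) (fun d => Real.log (P d))
  have claimA : condEnt μ W (fun ω => g (Y ω)) - condEnt μ W Y
      = ∑ x : α × γ, q x * (Real.log (q x) + Real.log (P (g x.2))
          - Real.log (Q (m x)) - Real.log (pY x.2)) := by
    unfold condEnt
    rw [ent_eq μ (fun ω => (W ω, g (Y ω))), ent_eq μ (fun ω => g (Y ω)),
      ent_eq μ (fun ω => (W ω, Y ω)), ent_eq μ Y]
    simp only [Real.negMulLog, ← hq_def, ← hpY_def, ← hP_def, ← hQ_def]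
    have e1 : ∑ y : α × δ, -Q y * Real.log (Q y)
        = -∑ x : α × γ, q x * Real.log (Q (m x)) := by
      rw [S2, ← Finset.sum_neg_distrib]
      exact Finset.sum_congr rfl fun y _ => by ring
    have e2 : ∑ d : δ, -P d * Real.log (P d)
        = -∑ x : α × γ, q x * Real.log (P (g x.2)) := by
      rw [S3, ← Finset.sum_neg_distrib]
      exact Finset.sum_congr rfl fun y _ => by ring
    have e3 : ∑ x : α × γ, -q x * Real.log (q x)
        = -∑ x : α × γ, q x * Real.log (q x) := by
      rw [← Finset.sum_neg_distrib]
      exact Finset.sum_congr rfl fun y _ => by ring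
    have e4 : ∑ c : γ, -pY c * Real.log (pY c)
        = -∑ x : α × γ, q x * Real.log (pY x.2) := by
      rw [S1, ← Finset.sum_neg_distrib]
      exact Finset.sum_congr rfl fun y _ => by ring
    have expand : ∑ x : α × γ, q x * (Real.log (q x) + Real.log (P (g x.2))
          - Real.log (Q (m x)) - Real.log (pY x.2))
        = ((∑ x : α × γ, q x * Real.log (q x)) + ∑ x : α × γ, q x * Real.log (P (g x.2)))
          - (∑ x : α × γ, q x * Real.log (Q (m x))) - ∑ x : α × γ, q x * Real.log (pY x.2) := by
      rw [← Finset.sum_add_distrib, ← Finset.sum_sub_distrib, ← Finset.sum_sub_distrib]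
      exact Finset.sum_congr rfl fun x _ => by ring
    rw [e1, e2, e3, e4, expand]
    ring
  -- the total sum bound
  have sumq : ∑ x : α × γ, q x = 1 := sum_pm μ hμ1 _
  have sumpY : ∑ c : γ, pY c = 1 := sum_pm μ hμ1 _
  have claimB : ∑ x : α × γ, q x * (Real.log (Q (m x)) + Real.log (pY x.2)
      - Real.log (q x) - Real.log (P (g x.2))) ≤ 0 := by
    have hbound : ∀ x : α × γ, q x * (Real.log (Q (m x)) + Real.log (pY x.2)
        - Real.log (q x) - Real.log (P (g x.2)))
        ≤ Q (m x) * pY x.2 / P (g x.2) - q x := fun x =>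
      logterm (hq0 x) (hqQ x) (hqpY x) (hpYP x.2)
    have hT : ∑ x : α × γ, (Q (m x) * pY x.2 / P (g x.2) - q x) = 0 := by
      rw [Finset.sum_sub_distrib, sumq]
      have : ∑ x : α × γ, Q (m x) * pY x.2 / P (g x.2) = 1 := by
        rw [Fintype.sum_prod_type_right]
        have hc : ∀ c : γ, ∑ a : α, Q (m (a, c)) * pY (a, c).2 / P (g (a, c).2)
            = pY c := by
          intro c
          simp only [hm_def]
          rw [← Finset.sum_div, ← Finset.sum_mul, marg (g c)]
          by_cases h : P (g c) = 0
          · have : pY c = 0 := le_antisymm (h ▸ hpYP c) (hpY0 c)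
            simp [h, this]
          · field_simp
        rw [Finset.sum_congr rfl fun c _ => hc c, sumpY]
      rw [this]
      ring
    calc ∑ x : α × γ, q x * (Real.log (Q (m x)) + Real.log (pY x.2)
          - Real.log (q x) - Real.log (P (g x.2)))
        ≤ ∑ x : α × γ, (Q (m x) * pY x.2 / P (g x.2) - q x) :=
          Finset.sum_le_sum fun x _ => hbound x
      _ = 0 := hT
  have : 0 ≤ condEnt μ W (fun ω => g (Y ω)) - condEnt μ W Y := by
    rw [claimA]
    have : ∑ x : α × γ, q x * (Real.log (q x) + Real.log (P (g x.2))
        - Real.log (Q (m x)) - Real.log (pY x.2))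
        = - ∑ x : α × γ, q x * (Real.log (Q (m x)) + Real.log (pY x.2)
        - Real.log (q x) - Real.log (P (g x.2))) := by
      rw [← Finset.sum_neg_distrib]
      exact Finset.sum_congr rfl fun x _ => by ring
    rw [this]
    linarith [claimB]
  linarith

end CondEnt

section Derived
variable {Ω : Type*} [Fintype Ω] {α β γ δ : Type*} [Fintype α] [DecidableEq α]
  [Fintype β] [DecidableEq β] [Fintype γ] [DecidableEq γ] [Fintype δ] [DecidableEq δ]
  (μ : Ω → ℝ) (hμ0 : ∀ ω, 0 ≤ μ ω) (hμ1 : ∑ ω, μ ω = 1)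

include hμ0 in
lemma condEnt_nonneg (X : Ω → α) (Y : Ω → γ) : 0 ≤ condEnt μ X Y := by
  unfold condEnt
  have h := ent_comp_le μ hμ0 (fun ω => (X ω, Y ω)) Prod.snd
  have h2 : ent μ (fun ω => Prod.snd (X ω, Y ω)) = ent μ Y := rfl
  linarith

include hμ0 hμ1 in
lemma condEnt_le_ent (X : Ω → α) (Y : Ω → γ) : condEnt μ X Y ≤ ent μ X := by
  have h := condEnt_comp_le μ hμ0 hμ1 X Y (fun _ => ())
  have h1 : ent μ (fun _ : Ω => ()) = 0 := ent_const μ hμ1 ()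
  have h2 : ent μ (fun ω => (X ω, ())) = ent μ X :=
    ent_congr μ hμ0 (X := fun ω => (X ω, ())) (Y := X) (fun a => (a, ())) Prod.fst
      (fun ω => rfl) (fun ω => rfl)
  unfold condEnt at h ⊢
  simp only at h
  linarith

lemma mutInfo_eq (W : Ω → α) (Z : Ω → γ) :
    mutInfo μ W Z = ent μ W - condEnt μ W Z := by
  unfold mutInfo condEnt; ring

include hμ0 hμ1 in
lemma mutInfo_nonneg (W : Ω → α) (Z : Ω → γ) : 0 ≤ mutInfo μ W Z := by
  rw [mutInfo_eq]
  linarith [condEnt_le_ent μ hμ0 hμ1 W Z]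

include hμ0 hμ1 in
lemma mutInfo_comp_le (W : Ω → α) (Y : Ω → γ) (g : γ → δ) :
    mutInfo μ W (fun ω => g (Y ω)) ≤ mutInfo μ W Y := by
  rw [mutInfo_eq, mutInfo_eq]
  linarith [condEnt_comp_le μ hμ0 hμ1 W Y g]

include hμ0 hμ1 in
lemma ent_pair_le (U : Ω → α) (V : Ω → γ) :
    ent μ (fun ω => (U ω, V ω)) ≤ ent μ U + ent μ V := by
  have := mutInfo_nonneg μ hμ0 hμ1 U V
  unfold mutInfo at this
  linarith

include hμ0 in
lemma condEnt_congr₁ {Z : Ω → α} {Z' : Ω → γ} (C : Ω → δ) (f : γ → α) (g : α → γ)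
    (hf : ∀ ω, Z ω = f (Z' ω)) (hg : ∀ ω, Z' ω = g (Z ω)) :
    condEnt μ Z C = condEnt μ Z' C := by
  unfold condEnt
  have : ent μ (fun ω => (Z ω, C ω)) = ent μ (fun ω => (Z' ω, C ω)) :=
    ent_congr μ hμ0 (fun x => (f x.1, x.2)) (fun x => (g x.1, x.2))
      (fun ω => by simp [hf ω]) (fun ω => by simp [hg ω])
  linarith

include hμ0 in
lemma condEnt_congr₂ {Z : Ω → α} {C : Ω → γ} {C' : Ω → δ} (f : δ → γ) (g : γ → δ)
    (hf : ∀ ω, C ω = f (C' ω)) (hg : ∀ ω, C' ω = g (C ω)) :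
    condEnt μ Z C = condEnt μ Z C' := by
  unfold condEnt
  have h1 : ent μ (fun ω => (Z ω, C ω)) = ent μ (fun ω => (Z ω, C' ω)) :=
    ent_congr μ hμ0 (fun x => (x.1, f x.2)) (fun x => (x.1, g x.2))
      (fun ω => by simp [hf ω]) (fun ω => by simp [hg ω])
  have h2 : ent μ C = ent μ C' := ent_congr μ hμ0 f g hf hg
  linarith

include hμ0 in
lemma condEnt_chain (Z : Ω → α) (W : Ω → γ) (C : Ω → δ) :
    condEnt μ (fun ω => (Z ω, W ω)) C
      = condEnt μ W C + condEnt μ Z (fun ω => (W ω, C ω)) := by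
  unfold condEnt
  have : ent μ (fun ω => ((Z ω, W ω), C ω)) = ent μ (fun ω => (Z ω, (W ω, C ω))) :=
    ent_congr μ hμ0 (fun x => ((x.1, x.2.1), x.2.2)) (fun x => (x.1.1, (x.1.2, x.2)))
      (fun ω => rfl) (fun ω => rfl)
  linarith

lemma ent_pair_of_condEnt_zero {Z : Ω → α} {C : Ω → γ} (h : condEnt μ Z C = 0) :
    ent μ (fun ω => (Z ω, C ω)) = ent μ C := by
  unfold condEnt at h
  linarith

include hμ0 in
lemma ent_swap (U : Ω → α) (V : Ω → γ) :
    ent μ (fun ω => (U ω, V ω)) = ent μ (fun ω => (V ω, U ω)) :=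
  ent_congr μ hμ0 Prod.swap Prod.swap (fun ω => rfl) (fun ω => rfl)

include hμ0 in
lemma ent_fst_le (U : Ω → α) (V : Ω → γ) :
    ent μ U ≤ ent μ (fun ω => (U ω, V ω)) := by
  have h := ent_comp_le μ hμ0 (fun ω => (U ω, V ω)) Prod.fst
  exact h

end Derived

section Family
variable {Ω : Type*} [Fintype Ω] {β γ : Type*} [Fintype β] [DecidableEq β]
  [Fintype γ] [DecidableEq γ]
  (μ : Ω → ℝ) (hμ0 : ∀ ω, 0 ≤ μ ω) (hμ1 : ∑ ω, μ ω = 1) {K' : ℕ}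

include hμ0 hμ1 in
lemma condEnt_family_zero (Z : Fin K' → Ω → β) (C : Ω → γ) (b₀ : β) :
    ∀ s : Finset (Fin K'), (∀ j ∈ s, condEnt μ (Z j) C = 0) →
    condEnt μ (fun ω => fun j => if j ∈ s then some (Z j ω) else none) C = 0 := by
  intro s
  induction s using Finset.induction_on with
  | empty =>
    intro _
    have heq : (fun ω => fun j : Fin K' =>
        if j ∈ (∅ : Finset (Fin K')) then some (Z j ω) else none)
        = fun _ : Ω => (fun _ : Fin K' => (none : Option β)) := by
      funext ω j; simp
    rw [heq]
    unfold condEnt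
    have := ent_congr μ hμ0 (X := fun ω => ((fun _ : Fin K' => (none : Option β)), C ω))
      (Y := C) (fun c => (fun _ => none, c)) Prod.snd (fun ω => rfl) (fun ω => rfl)
    linarith
  | @insert j s hj ih =>
    intro h
    have h0 : condEnt μ (Z j) C = 0 := h j (Finset.mem_insert_self j s)
    have ihs := ih (fun j' hj' => h j' (Finset.mem_insert_of_mem hj'))
    have hrel : condEnt μ (fun ω => fun j' => if j' ∈ insert j s then some (Z j' ω) else none) C
        = condEnt μ (fun ω => (Z j ω,
            fun j' : Fin K' => if j' ∈ s then some (Z j' ω) else none)) C := by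
      apply condEnt_congr₁ μ hμ0 C
        (f := fun zc : β × (Fin K' → Option β) =>
          fun j' => if j' = j then some zc.1 else zc.2 j')
        (g := fun F : Fin K' → Option β =>
          ((F j).getD b₀, fun j' => if j' = j then none else F j'))
      · intro ω; funext j'
        by_cases hcase : j' = j
        · subst hcase; simp
        · simp [hcase, Finset.mem_insert]
      · intro ω
        refine Prod.ext ?_ ?_
        · simp
        · funext j'
          by_cases hcase : j' = j
          · subst hcase; simp [hj]
          · simp [hcase, Finset.mem_insert]
    rw [hrel, condEnt_chain μ hμ0 (Z j)
      (fun ω => fun j' : Fin K' => if j' ∈ s then some (Z j' ω) else none) C, ihs]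
    have hle : condEnt μ (Z j) (fun ω =>
        ((fun j' : Fin K' => if j' ∈ s then some (Z j' ω) else none), C ω))
        ≤ condEnt μ (Z j) C := by
      have hc := condEnt_comp_le μ hμ0 hμ1 (Z j) (fun ω =>
        ((fun j' : Fin K' => if j' ∈ s then some (Z j' ω) else none), C ω)) Prod.snd
      exact hc
    have hge := condEnt_nonneg μ hμ0 (Z j) (fun ω =>
      ((fun j' : Fin K' => if j' ∈ s then some (Z j' ω) else none), C ω))
    linarith

include hμ0 hμ1 in
lemma ent_family_le (Z : Fin K' → Ω → β) (b₀ : β) :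
    ∀ s : Finset (Fin K'),
    ent μ (fun ω => fun j => if j ∈ s then some (Z j ω) else none)
      ≤ ∑ j ∈ s, ent μ (Z j) := by
  intro s
  induction s using Finset.induction_on with
  | empty =>
    have heq : (fun ω => fun j : Fin K' =>
        if j ∈ (∅ : Finset (Fin K')) then some (Z j ω) else none)
        = fun _ : Ω => (fun _ : Fin K' => (none : Option β)) := by
      funext ω j; simp
    rw [heq, ent_const μ hμ1, Finset.sum_empty]
  | @insert j s hj ih =>
    have hrel : ent μ (fun ω => fun j' => if j' ∈ insert j s then some (Z j' ω) else none)
        = ent μ (fun ω => (Z j ω,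
            fun j' : Fin K' => if j' ∈ s then some (Z j' ω) else none)) := by
      apply ent_congr μ hμ0
        (f := fun zc : β × (Fin K' → Option β) =>
          fun j' => if j' = j then some zc.1 else zc.2 j')
        (g := fun F : Fin K' → Option β =>
          ((F j).getD b₀, fun j' => if j' = j then none else F j'))
      · intro ω; funext j'
        by_cases hcase : j' = j
        · subst hcase; simp
        · simp [hcase, Finset.mem_insert]
      · intro ω
        refine Prod.ext ?_ ?_
        · simp
        · funext j'
          by_cases hcase : j' = j
          · subst hcase; simp [hj]
          · simp [hcase, Finset.mem_insert]
    rw [hrel, Finset.sum_insert hj]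
    have := ent_pair_le μ hμ0 hμ1 (Z j)
      (fun ω => fun j' : Fin K' => if j' ∈ s then some (Z j' ω) else none)
    linarith

end Family

lemma card_filter_lt_fin (K m : ℕ) (h : m ≤ K) :
    (Finset.univ.filter fun j : Fin K => (j : ℕ) < m).card = m := by
  have key : (Finset.univ.filter fun j : Fin K => (j : ℕ) < m).card
      = (Finset.range m).card := by
    exact Finset.card_bij' (fun (j : Fin K) _ => (j : ℕ))
      (fun n hn => (⟨n, lt_of_lt_of_le (Finset.mem_range.mp hn) h⟩ : Fin K))
      (fun a ha => Finset.mem_range.mpr (Finset.mem_filter.mp ha).2)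
      (fun b hb => Finset.mem_filter.mpr ⟨Finset.mem_univ _, Finset.mem_range.mp hb⟩)
      (fun a ha => rfl) (fun b hb => rfl)
  rw [key, Finset.card_range]

lemma card_filter_ge_fin (K m : ℕ) (h : m ≤ K) :
    (Finset.univ.filter fun j : Fin K => m ≤ (j : ℕ)).card = K - m := by
  have h1 : (Finset.univ.filter fun j : Fin K => m ≤ (j : ℕ))
      = (Finset.univ.filter fun j : Fin K => ¬ ((j : ℕ) < m)) := by
    apply Finset.filter_congr
    intro j _
    simp [not_lt]
  rw [h1]
  have h2 := Finset.card_filter_add_card_filter_not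
    (s := (Finset.univ : Finset (Fin K))) (p := fun j : Fin K => (j : ℕ) < m)
  rw [card_filter_lt_fin K m h] at h2
  simp only [Finset.card_univ, Fintype.card_fin] at h2
  omega

def tailF {Ω β : Type*} {K : ℕ} (σ : Equiv.Perm (Fin K)) (At : Fin K → Ω → β) (m : ℕ) :
    Ω → (Fin K → Option β) :=
  fun ω j => if m ≤ (j : ℕ) then some (At (σ j) ω) else none

def headF {Ω β : Type*} {K : ℕ} (σ : Equiv.Perm (Fin K)) (At : Fin K → Ω → β) (m : ℕ) :
    Ω → (Fin K → Option β) :=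
  fun ω j => if (j : ℕ) < m then some (At (σ j) ω) else none

/-- If `X` is a deterministic function of `A` with `H(A) = N·d`,
the batches `A_k^t`, `A_k^{t+1}` are deterministic functions of `A` (the time-`t`
batches jointly determining `A`), each with entropy `(N/K)·d`, the decodability
constraint `H(A_k^{t+1} | A_k^t, X) = 0` holds for all `k`, and the mutual
informations decompose additively as
`I(A_{σ_i}^t ; A_{σ_{i+1}}^{t+1},…,A_{σ_K}^{t+1}) = ∑_{j>i} I(A_{σ_i}^t ; A_{σ_j}^{t+1})`,
then `H(X) ≥ ∑_{i<j} I(A_{σ_i}^t ; A_{σ_j}^{t+1})` for any permutation `σ`. -/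
theorem stmt11 {Ω αA αX β : Type} [Fintype Ω] [Fintype αA] [DecidableEq αA]
    [Fintype αX] [DecidableEq αX] [Fintype β] [DecidableEq β]
    (μ : Ω → ℝ) (hμ0 : ∀ ω, 0 ≤ μ ω) (hμ1 : ∑ ω, μ ω = 1)
    (K N : ℕ) (hK : 0 < K) (d : ℝ)
    (A : Ω → αA) (X : Ω → αX) (At At1 : Fin K → Ω → β)
    (hA : ent μ A = N * d)
    (hXA : condEnt μ X A = 0)
    (hAtA : ∀ k, condEnt μ (At k) A = 0)
    (hAt1A : ∀ k, condEnt μ (At1 k) A = 0)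
    (hentAt : ∀ k, ent μ (At k) = ((N : ℝ) / K) * d)
    (hentAt1 : ∀ k, ent μ (At1 k) = ((N : ℝ) / K) * d)
    (hjoint : condEnt μ A (fun ω => fun k : Fin K => At k ω) = 0)
    (hdec : ∀ k, condEnt μ (At1 k) (fun ω => (At k ω, X ω)) = 0)
    (σ : Equiv.Perm (Fin K))
    (hadd : ∀ i : Fin K,
      mutInfo μ (At (σ i))
        (fun ω => fun j : Fin K => if i < j then some (At1 (σ j) ω) else none) =
      ∑ j ∈ Finset.univ.filter (fun j => i < j), mutInfo μ (At (σ i)) (At1 (σ j))) :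
    ent μ X ≥
      ∑ i : Fin K, ∑ j ∈ Finset.univ.filter (fun j => i < j),
        mutInfo μ (At (σ i)) (At1 (σ j)) := by
  classical
  -- basic objects
  have hΩ : Nonempty Ω := by
    rcases isEmpty_or_nonempty Ω with h | h
    · rw [Finset.univ_eq_empty, Finset.sum_empty] at hμ1
      norm_num at hμ1
    · exact h
  obtain ⟨ω₀⟩ := hΩ
  set b₀ : β := At ⟨0, hK⟩ ω₀ with hb₀
  set c : ℝ := ((N : ℝ) / K) * d with hc
  have hc0 : 0 ≤ c := by
    have := ent_nonneg μ hμ0 hμ1 (At ⟨0, hK⟩)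
    rw [hentAt ⟨0, hK⟩] at this
    linarith
  have hKne : (K : ℝ) ≠ 0 := Nat.cast_ne_zero.mpr hK.ne'
  have hNd : (N : ℝ) * d = K * c := by
    rw [hc]; field_simp
  -- 1. total entropy of the time-t family
  have htotal : ent μ (fun ω => fun j : Fin K => At (σ j) ω) = (K : ℝ) * c := by
    have copt : condEnt μ (fun ω => fun k : Fin K =>
        if k ∈ (Finset.univ : Finset (Fin K)) then some (At k ω) else none) A = 0 :=
      condEnt_family_zero μ hμ0 hμ1 At A b₀ Finset.univ (fun k _ => hAtA k)
    have cJA : condEnt μ (fun ω => fun k : Fin K => At k ω) A = 0 := by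
      rw [condEnt_congr₁ μ hμ0 A
        (Z := fun ω => fun k : Fin K => At k ω)
        (Z' := fun ω => fun k : Fin K =>
          if k ∈ (Finset.univ : Finset (Fin K)) then some (At k ω) else none)
        (f := fun F : Fin K → Option β => fun k => (F k).getD b₀)
        (g := fun G : Fin K → β => fun k =>
          if k ∈ (Finset.univ : Finset (Fin K)) then some (G k) else none)
        (fun ω => by funext k; simp) (fun ω => by funext k; simp)]
      exact copt
    have e1 : ent μ (fun ω => (A ω, (fun k : Fin K => At k ω))) =
        ent μ (fun ω => fun k : Fin K => At k ω) := ent_pair_of_condEnt_zero μ hjoint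
    have e2 := ent_fst_le μ hμ0 A (fun ω => fun k : Fin K => At k ω)
    have e3 : ent μ (fun ω => ((fun k : Fin K => At k ω), A ω)) = ent μ A :=
      ent_pair_of_condEnt_zero μ cJA
    have e4 := ent_fst_le μ hμ0 (fun ω => fun k : Fin K => At k ω) A
    have e5 : ent μ (fun ω => fun j : Fin K => At (σ j) ω)
        = ent μ (fun ω => fun k : Fin K => At k ω) :=
      ent_congr μ hμ0
        (X := fun ω => fun j : Fin K => At (σ j) ω)
        (Y := fun ω => fun k : Fin K => At k ω)
        (fun F => fun j => F (σ j)) (fun F => fun k => F (σ⁻¹ k))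
        (fun ω => rfl) (fun ω => by funext k; simp)
    rw [e5]
    linarith
  -- 2. tail entropy bound
  have htail : ∀ m : ℕ, m ≤ K → ent μ (tailF σ At m) ≤ ((K - m : ℕ) : ℝ) * c := by
    intro m hmK
    have hshape : tailF σ At m = fun ω => fun j : Fin K =>
        if j ∈ Finset.univ.filter (fun j : Fin K => m ≤ (j : ℕ))
        then some (At (σ j) ω) else none := by
      funext ω j
      simp [tailF]
    rw [hshape]
    refine le_trans (ent_family_le μ hμ0 hμ1 (fun j => At (σ j)) b₀
      (Finset.univ.filter (fun j : Fin K => m ≤ (j : ℕ)))) ?_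
    rw [Finset.sum_congr rfl (fun j _ => hentAt (σ j))]
    rw [Finset.sum_const, card_filter_ge_fin K m hmK, nsmul_eq_mul]
  -- 3. head entropy bound
  have hhead : ∀ m : ℕ, m ≤ K → ent μ (headF σ At m) ≤ (m : ℝ) * c := by
    intro m hmK
    have hshape : headF σ At m = fun ω => fun j : Fin K =>
        if j ∈ Finset.univ.filter (fun j : Fin K => (j : ℕ) < m)
        then some (At (σ j) ω) else none := by
      funext ω j
      simp [headF]
    rw [hshape]
    refine le_trans (ent_family_le μ hμ0 hμ1 (fun j => At (σ j)) b₀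
      (Finset.univ.filter (fun j : Fin K => (j : ℕ) < m))) ?_
    rw [Finset.sum_congr rfl (fun j _ => hentAt (σ j))]
    rw [Finset.sum_const, card_filter_lt_fin K m hmK, nsmul_eq_mul]
  -- 4. independence: mutInfo of At (σ i) with the tail is ≤ 0
  have hindep : ∀ m : ℕ, (hm : m < K) →
      mutInfo μ (At (σ ⟨m, hm⟩)) (tailF σ At (m + 1)) ≤ 0 := by
    intro m hm
    have hrel : ent μ (fun ω => fun j : Fin K => At (σ j) ω)
        = ent μ (fun ω => (headF σ At m ω,
            (At (σ ⟨m, hm⟩) ω, tailF σ At (m + 1) ω))) := by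
      apply ent_congr μ hμ0
        (f := fun x : (Fin K → Option β) × (β × (Fin K → Option β)) =>
          fun j : Fin K => if (j : ℕ) < m then (x.1 j).getD b₀
            else if (j : ℕ) = m then x.2.1 else (x.2.2 j).getD b₀)
        (g := fun F : Fin K → β =>
          ((fun j : Fin K => if (j : ℕ) < m then some (F j) else none),
           (F ⟨m, hm⟩, fun j : Fin K => if m + 1 ≤ (j : ℕ) then some (F j) else none)))
      · intro ω; funext j
        by_cases h1 : (j : ℕ) < m
        · simp [headF, h1]
        · by_cases h2 : (j : ℕ) = m
          · have hji : j = ⟨m, hm⟩ := Fin.ext h2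
            simp [h1, h2, hji]
          · have h3 : m + 1 ≤ (j : ℕ) := by omega
            simp [tailF, h1, h2, h3]
      · intro ω
        refine Prod.ext ?_ (Prod.ext rfl ?_)
        · funext j; simp [headF]
        · funext j; simp [tailF]
    have hsq : ent μ (fun ω => fun j : Fin K => At (σ j) ω)
        ≤ ent μ (headF σ At m)
          + ent μ (fun ω => (At (σ ⟨m, hm⟩) ω, tailF σ At (m + 1) ω)) := by
      rw [hrel]
      exact ent_pair_le μ hμ0 hμ1 _ _
    have h1 := hhead m hm.le
    have h2 := htail (m + 1) hm
    have h3 : ent μ (At (σ ⟨m, hm⟩)) = c := hentAt _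
    have hcast : ((K - (m + 1) : ℕ) : ℝ) = (K : ℝ) - (m : ℝ) - 1 := by
      have : m + 1 ≤ K := hm
      push_cast [Nat.cast_sub this]
      ring
    rw [hcast] at h2
    rw [htotal] at hsq
    unfold mutInfo
    nlinarith [hc0]
  -- 5. decodability of the block St i from (X, tail)
  have hdecS : ∀ m : ℕ, (hm : m < K) →
      condEnt μ (fun ω => fun j : Fin K => if (⟨m, hm⟩ : Fin K) < j
          then some (At1 (σ j) ω) else none)
        (fun ω => (X ω, tailF σ At (m + 1) ω)) = 0 := by
    intro m hm
    have hcond : ∀ j ∈ Finset.univ.filter (fun j : Fin K => (⟨m, hm⟩ : Fin K) < j),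
        condEnt μ (At1 (σ j)) (fun ω => (X ω, tailF σ At (m + 1) ω)) = 0 := by
      intro j hj
      have hij : m < (j : ℕ) := by
        have := (Finset.mem_filter.mp hj).2
        rwa [Fin.lt_def] at this
      have hle : condEnt μ (At1 (σ j)) (fun ω => (X ω, tailF σ At (m + 1) ω))
          ≤ condEnt μ (At1 (σ j)) (fun ω =>
            ((tailF σ At (m + 1) ω j).getD b₀, X ω)) :=
        condEnt_comp_le μ hμ0 hμ1 (At1 (σ j)) (fun ω => (X ω, tailF σ At (m + 1) ω))
          (fun x => ((x.2 j).getD b₀, x.1))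
      have heq : (fun ω => ((tailF σ At (m + 1) ω j).getD b₀, X ω))
          = fun ω => (At (σ j) ω, X ω) := by
        funext ω
        simp [tailF, Nat.succ_le_of_lt hij]
      rw [heq] at hle
      rw [hdec (σ j)] at hle
      have hge := condEnt_nonneg μ hμ0 (At1 (σ j)) (fun ω => (X ω, tailF σ At (m + 1) ω))
      linarith
    have hfam := condEnt_family_zero μ hμ0 hμ1 (fun j => At1 (σ j))
      (fun ω => (X ω, tailF σ At (m + 1) ω)) b₀
      (Finset.univ.filter (fun j : Fin K => (⟨m, hm⟩ : Fin K) < j)) hcond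
    have hshape : (fun ω => fun j : Fin K =>
        if j ∈ Finset.univ.filter (fun j : Fin K => (⟨m, hm⟩ : Fin K) < j)
        then some (At1 (σ j) ω) else none)
        = fun ω => fun j : Fin K => if (⟨m, hm⟩ : Fin K) < j
          then some (At1 (σ j) ω) else none := by
      funext ω j
      simp
    rw [hshape] at hfam
    exact hfam
  -- 6. the step inequality
  have hstep : ∀ m : ℕ, (hm : m < K) →
      condEnt μ X (tailF σ At m)
        + (∑ j ∈ Finset.univ.filter (fun j => (⟨m, hm⟩ : Fin K) < j),
            mutInfo μ (At (σ ⟨m, hm⟩)) (At1 (σ j)))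
      ≤ condEnt μ X (tailF σ At (m + 1)) := by
    intro m hm
    -- (a) relabel tailF m as (At (σ i), tailF (m+1))
    have hFm : condEnt μ X (tailF σ At m)
        = condEnt μ X (fun ω => (At (σ ⟨m, hm⟩) ω, tailF σ At (m + 1) ω)) := by
      apply condEnt_congr₂ μ hμ0
        (f := fun x : β × (Fin K → Option β) =>
          fun j : Fin K => if (j : ℕ) = m then some x.1 else x.2 j)
        (g := fun F : Fin K → Option β =>
          ((F ⟨m, hm⟩).getD b₀, fun j : Fin K => if (j : ℕ) = m then none else F j))
      · intro ω; funext j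
        by_cases h2 : (j : ℕ) = m
        · have hji : j = ⟨m, hm⟩ := Fin.ext h2
          simp [tailF, h2, hji]
        · simp only [tailF]
          rw [if_neg h2]
          by_cases h3 : m + 1 ≤ (j : ℕ)
          · rw [if_pos (by omega), if_pos h3]
          · rw [if_neg (by omega), if_neg h3]
      · intro ω
        refine Prod.ext ?_ ?_
        · simp [tailF]
        · funext j
          by_cases h2 : (j : ℕ) = m
          · simp only [tailF]
            rw [if_pos h2, if_neg (by omega)]
          · simp only [tailF]
            rw [if_neg h2]
            by_cases h3 : m + 1 ≤ (j : ℕ)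
            · rw [if_pos h3, if_pos (by omega)]
            · rw [if_neg h3, if_neg (by omega)]
    -- (b) swap entropy
    have t1 : ent μ (fun ω => (X ω, (At (σ ⟨m, hm⟩) ω, tailF σ At (m + 1) ω)))
        = ent μ (fun ω => (At (σ ⟨m, hm⟩) ω, (X ω, tailF σ At (m + 1) ω))) :=
      ent_congr μ hμ0
        (f := fun x : β × (αX × (Fin K → Option β)) => (x.2.1, (x.1, x.2.2)))
        (g := fun x : αX × (β × (Fin K → Option β)) => (x.2.1, (x.1, x.2.2)))
        (fun ω => rfl) (fun ω => rfl)
    -- (c) decodability consequences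
    have hSC := hdecS m hm
    have tA : ent μ (fun ω => ((X ω, tailF σ At (m + 1) ω),
        (fun j : Fin K => if (⟨m, hm⟩ : Fin K) < j then some (At1 (σ j) ω) else none)))
        = ent μ (fun ω => (X ω, tailF σ At (m + 1) ω)) := by
      have hsw : ent μ (fun ω => ((X ω, tailF σ At (m + 1) ω),
          (fun j : Fin K => if (⟨m, hm⟩ : Fin K) < j then some (At1 (σ j) ω) else none)))
          = ent μ (fun ω =>
            ((fun j : Fin K => if (⟨m, hm⟩ : Fin K) < j then some (At1 (σ j) ω) else none),
             (X ω, tailF σ At (m + 1) ω))) :=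
        ent_swap μ hμ0 _ _
      rw [hsw]
      exact ent_pair_of_condEnt_zero μ hSC
    have hSC2 : condEnt μ (fun ω => fun j : Fin K =>
        if (⟨m, hm⟩ : Fin K) < j then some (At1 (σ j) ω) else none)
        (fun ω => (At (σ ⟨m, hm⟩) ω, (X ω, tailF σ At (m + 1) ω))) = 0 := by
      have hle : condEnt μ (fun ω => fun j : Fin K =>
          if (⟨m, hm⟩ : Fin K) < j then some (At1 (σ j) ω) else none)
          (fun ω => (At (σ ⟨m, hm⟩) ω, (X ω, tailF σ At (m + 1) ω)))
          ≤ condEnt μ (fun ω => fun j : Fin K =>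
            if (⟨m, hm⟩ : Fin K) < j then some (At1 (σ j) ω) else none)
          (fun ω => (X ω, tailF σ At (m + 1) ω)) :=
        condEnt_comp_le μ hμ0 hμ1 _
          (fun ω => (At (σ ⟨m, hm⟩) ω, (X ω, tailF σ At (m + 1) ω))) Prod.snd
      have hge := condEnt_nonneg μ hμ0 (fun ω => fun j : Fin K =>
        if (⟨m, hm⟩ : Fin K) < j then some (At1 (σ j) ω) else none)
        (fun ω => (At (σ ⟨m, hm⟩) ω, (X ω, tailF σ At (m + 1) ω)))
      rw [hSC] at hle
      linarith
    have tB : ent μ (fun ω => (At (σ ⟨m, hm⟩) ω, ((X ω, tailF σ At (m + 1) ω),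
        (fun j : Fin K => if (⟨m, hm⟩ : Fin K) < j then some (At1 (σ j) ω) else none))))
        = ent μ (fun ω => (At (σ ⟨m, hm⟩) ω, (X ω, tailF σ At (m + 1) ω))) := by
      have hsw : ent μ (fun ω => (At (σ ⟨m, hm⟩) ω, ((X ω, tailF σ At (m + 1) ω),
          (fun j : Fin K => if (⟨m, hm⟩ : Fin K) < j then some (At1 (σ j) ω) else none))))
          = ent μ (fun ω =>
            ((fun j : Fin K => if (⟨m, hm⟩ : Fin K) < j then some (At1 (σ j) ω) else none),
             (At (σ ⟨m, hm⟩) ω, (X ω, tailF σ At (m + 1) ω)))) :=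
        ent_congr μ hμ0
          (f := fun x : (Fin K → Option β) × (β × (αX × (Fin K → Option β))) =>
            (x.2.1, (x.2.2, x.1)))
          (g := fun y : β × ((αX × (Fin K → Option β)) × (Fin K → Option β)) =>
            (y.2.2, (y.1, y.2.1)))
          (fun ω => rfl) (fun ω => rfl)
      rw [hsw]
      exact ent_pair_of_condEnt_zero μ hSC2
    have tC : mutInfo μ (At (σ ⟨m, hm⟩))
        (fun ω => fun j : Fin K =>
          if (⟨m, hm⟩ : Fin K) < j then some (At1 (σ j) ω) else none)
        ≤ mutInfo μ (At (σ ⟨m, hm⟩)) (fun ω => ((X ω, tailF σ At (m + 1) ω),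
          (fun j : Fin K => if (⟨m, hm⟩ : Fin K) < j then some (At1 (σ j) ω) else none))) :=
      mutInfo_comp_le μ hμ0 hμ1 (At (σ ⟨m, hm⟩))
        (fun ω => ((X ω, tailF σ At (m + 1) ω),
          (fun j : Fin K => if (⟨m, hm⟩ : Fin K) < j then some (At1 (σ j) ω) else none)))
        Prod.snd
    have tE := hadd ⟨m, hm⟩
    rw [tE] at tC
    have tD : mutInfo μ (At (σ ⟨m, hm⟩)) (fun ω => ((X ω, tailF σ At (m + 1) ω),
        (fun j : Fin K => if (⟨m, hm⟩ : Fin K) < j then some (At1 (σ j) ω) else none)))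
        = ent μ (At (σ ⟨m, hm⟩))
          + ent μ (fun ω => ((X ω, tailF σ At (m + 1) ω),
            (fun j : Fin K => if (⟨m, hm⟩ : Fin K) < j then some (At1 (σ j) ω) else none)))
          - ent μ (fun ω => (At (σ ⟨m, hm⟩) ω, ((X ω, tailF σ At (m + 1) ω),
            (fun j : Fin K => if (⟨m, hm⟩ : Fin K) < j then some (At1 (σ j) ω) else none)))) :=
      rfl
    have t3 := hindep m hm
    have t3' : mutInfo μ (At (σ ⟨m, hm⟩)) (tailF σ At (m + 1))
        = ent μ (At (σ ⟨m, hm⟩)) + ent μ (tailF σ At (m + 1))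
          - ent μ (fun ω => (At (σ ⟨m, hm⟩) ω, tailF σ At (m + 1) ω)) := rfl
    rw [t3'] at t3
    rw [tD] at tC
    rw [hFm]
    unfold condEnt
    simp only at tC t3 ⊢
    linarith [tA, tB, t1, tC, t3]
  -- 7. telescoping induction
  have key : ∀ m : ℕ, m ≤ K →
      (∑ i ∈ Finset.univ.filter (fun i : Fin K => (i : ℕ) < m),
        ∑ j ∈ Finset.univ.filter (fun j => i < j),
          mutInfo μ (At (σ i)) (At1 (σ j)))
      ≤ condEnt μ X (tailF σ At m) := by
    intro m
    induction m with
    | zero =>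
      intro _
      have hempty : Finset.univ.filter (fun i : Fin K => (i : ℕ) < 0) = ∅ := by
        apply Finset.filter_false_of_mem
        intro i _
        omega
      rw [hempty, Finset.sum_empty]
      exact condEnt_nonneg μ hμ0 X _
    | succ n ih =>
      intro hnK
      have hn : n < K := hnK
      have hins : Finset.univ.filter (fun i : Fin K => (i : ℕ) < n + 1)
          = insert (⟨n, hn⟩ : Fin K)
            (Finset.univ.filter (fun i : Fin K => (i : ℕ) < n)) := by
        ext j
        simp only [Finset.mem_filter, Finset.mem_insert, Finset.mem_univ, true_and,
          Fin.ext_iff]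
        omega
      have hnotmem : (⟨n, hn⟩ : Fin K) ∉
          Finset.univ.filter (fun i : Fin K => (i : ℕ) < n) := by
        simp
      rw [hins, Finset.sum_insert hnotmem]
      have h1 := ih hn.le
      have h2 := hstep n hn
      linarith
  -- 8. conclusion
  have hfin : condEnt μ X (tailF σ At K) = ent μ X := by
    have h1 : tailF σ At K = fun _ : Ω => (fun _ : Fin K => (none : Option β)) := by
      funext ω j
      simp only [tailF]
      rw [if_neg]
      omega
    rw [h1]
    unfold condEnt
    rw [ent_const μ hμ1]
    have h2 : ent μ (fun ω => (X ω, (fun _ : Fin K => (none : Option β)))) = ent μ X :=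
      ent_congr μ hμ0
        (X := fun ω => (X ω, (fun _ : Fin K => (none : Option β)))) (Y := X)
        (fun x => (x, fun _ => none)) Prod.fst (fun ω => rfl) (fun ω => rfl)
    rw [h2]
    ring
  have hkey := key K le_rfl
  rw [hfin] at hkey
  have huniv : Finset.univ.filter (fun i : Fin K => (i : ℕ) < K) = Finset.univ := by
    apply Finset.filter_true_of_mem
    intro i _
    exact i.isLt
  rw [huniv] at hkey
  exact hkey
end

section
/- The entropy lower bound chain: for random variables A (with H(A)=Nd), message X with H(X|A)=0 and H(X)=Rd, batches A_1^t,...,A_K^t each of entropy Nd/K and jointly determining A, and batches A_j^{t+1} satisfying H(A_j^{t+1}|A_j^t, X)=0, it holds that Nd ≤ Nd/K + Rd + ∑_{i=1}^{K-1} [Nd/K - I(A_{σ_i}^t ; (A_{σ_{i+1}}^{t+1},...,A_{σ_K}^{t+1}))] for any permutation σ, hence R ≥ (1/d)·∑_{i=1}^{K-1} I(A_{σ_i}^t ; (A_{σ_{i+1}}^{t+1},...,A_{σ_K}^{t+1})). -/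
open Finset

/-!
Since the batches `A^t` determine `A`, `H(A) ≤ H(A^t) ≤ H(X) + H(A^t | X)`, and the chain rule
along `σ` splits `H(A^t | X)` into the terms `H(A_{σ_i}^t | A_{σ_{i+1}}^t, …, A_{σ_K}^t, X)`.
The later batches `A_{σ_{i+1}}^{t+1}, …, A_{σ_K}^{t+1}` are functions of that condition, so the
`i`-th term is at most `H(A_{σ_i}^t | A_{σ_{i+1}}^{t+1}, …, A_{σ_K}^{t+1}) = N d / K - I(…)`,
while the last one is at most `H(A_{σ_K}^t) = N d / K`. Conditional entropy decreasing under
coarsening of the condition is the log-sum inequality.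
-/

open Real

namespace FiniteEntropy

theorem sum_mul_log_sub_log_le {ι : Type*} (s : Finset ι) {a b : ι → ℝ}
    (ha : ∀ i ∈ s, 0 ≤ a i) (hab : ∀ i ∈ s, a i ≤ b i) :
    ∑ i ∈ s, a i * (log (b i) - log (a i)) ≤
      (∑ i ∈ s, a i) * (log (∑ i ∈ s, b i) - log (∑ i ∈ s, a i)) := by
  set A := ∑ i ∈ s, a i
  set B := ∑ i ∈ s, b i
  rcases (sum_nonneg ha : 0 ≤ A).eq_or_lt with hA | hA
  · have hzero : ∀ i ∈ s, a i = 0 := (sum_eq_zero_iff_of_nonneg ha).1 hA.symm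
    rw [show A = 0 from hA.symm, zero_mul]
    exact (sum_eq_zero fun i hi => by rw [hzero i hi, zero_mul]).le
  have hB : 0 < B := hA.trans_le (sum_le_sum hab)
  -- `log t ≤ t - 1` at `t = (b i / B) / (a i / A)`, multiplied by `a i`
  have key : ∀ i ∈ s, a i * (log (b i) - log (a i)) ≤
      b i * A / B - a i + a i * (log B - log A) := by
    intro i hi
    rcases (ha i hi).eq_or_lt with hai | hai
    · rw [← hai]
      have : 0 ≤ b i * A / B := div_nonneg (mul_nonneg (hai ▸ hab i hi) hA.le) hB.le
      simpa using this
    have hbi : 0 < b i := hai.trans_le (hab i hi)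
    have hlog := log_le_sub_one_of_pos (show 0 < b i * A / (B * a i) by positivity)
    rw [log_div (by positivity) (by positivity), log_mul hbi.ne' hA.ne',
      log_mul hB.ne' hai.ne'] at hlog
    have h := mul_le_mul_of_nonneg_left hlog hai.le
    rw [show a i * (b i * A / (B * a i) - 1) = b i * A / B - a i by field_simp] at h
    linarith
  calc ∑ i ∈ s, a i * (log (b i) - log (a i))
      ≤ ∑ i ∈ s, (b i * A / B - a i + a i * (log B - log A)) := sum_le_sum key
    _ = A * (log B - log A) := by
      rw [sum_add_distrib, sum_sub_distrib, ← sum_div, ← sum_mul, ← sum_mul,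
        mul_div_cancel_left₀ A hB.ne']
      ring

section Law

variable {Ω α γ δ : Type*} [Fintype Ω] [DecidableEq α] [DecidableEq γ] [DecidableEq δ] {μ : Ω → ℝ}

noncomputable def law (μ : Ω → ℝ) (X : Ω → α) (a : α) : ℝ :=
  ∑ ω ∈ univ.filter (fun ω => X ω = a), μ ω

theorem law_nonneg (hμ0 : ∀ ω, 0 ≤ μ ω) (X : Ω → α) (a : α) : 0 ≤ law μ X a :=
  sum_nonneg fun ω _ => hμ0 ω

theorem law_comp [Fintype α] (μ : Ω → ℝ) (X : Ω → α) (g : α → γ) (c : γ) :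
    law μ (fun ω => g (X ω)) c = ∑ a ∈ univ.filter (fun a => g a = c), law μ X a := by
  rw [law, ← sum_fiberwise_of_maps_to (t := univ.filter fun a => g a = c) (g := X) (by simp)]
  refine sum_congr rfl fun a ha => ?_
  rw [filter_filter]
  refine sum_congr (filter_congr fun ω _ => ?_) fun _ _ => rfl
  rw [mem_filter] at ha
  exact ⟨And.right, fun h => ⟨h ▸ ha.2, h⟩⟩

theorem law_eq_sum_law_pair [Fintype α] (μ : Ω → ℝ) (U : Ω → α) (V : Ω → γ) (v : γ) :
    law μ V v = ∑ u, law μ (fun ω => (U ω, V ω)) (u, v) := by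
  rw [law, ← sum_fiberwise _ U]
  refine sum_congr rfl fun u _ => ?_
  rw [law, filter_filter]
  exact sum_congr (filter_congr fun ω _ => by simp [and_comm]) fun _ _ => rfl

theorem law_pair_comp [Fintype γ] (μ : Ω → ℝ) (U : Ω → α) (V : Ω → γ) (g : γ → δ) (u : α) (w : δ) :
    law μ (fun ω => (U ω, g (V ω))) (u, w) =
      ∑ v ∈ univ.filter (fun v => g v = w), law μ (fun ω => (U ω, V ω)) (u, v) := by
  rw [law, ← sum_fiberwise_of_maps_to (t := univ.filter fun v => g v = w) (g := V) (by simp)]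
  refine sum_congr rfl fun v hv => ?_
  rw [law, filter_filter]
  rw [mem_filter] at hv
  refine sum_congr (filter_congr fun ω _ => ?_) fun _ _ => rfl
  simp only [Prod.mk.injEq]
  exact ⟨fun h => ⟨h.1.1, h.2⟩, fun h => ⟨⟨h.1, h.2 ▸ hv.2⟩, h.2⟩⟩

end Law

-- Coordinates outside `s` are `none`: this is how the statement encodes the tuple
-- `(A_{σ_{i+1}}^{t+1}, …, A_{σ_K}^{t+1})`.
def subfamily {Ω ι β : Type*} [DecidableEq ι] (s : Finset ι) (Y : ι → Ω → β) (ω : Ω) :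
    ι → Option β :=
  fun j => if j ∈ s then some (Y j ω) else none

variable {Ω α γ δ : Type*} [Fintype Ω] [Fintype α] [DecidableEq α] [Fintype γ] [DecidableEq γ]
  [Fintype δ] [DecidableEq δ] {μ : Ω → ℝ}

theorem ent_eq_neg_sum_law (μ : Ω → ℝ) (X : Ω → α) :
    ent μ X = -∑ a, law μ X a * log (law μ X a) := rfl

theorem ent_comp_le (hμ0 : ∀ ω, 0 ≤ μ ω) (X : Ω → α) (g : α → γ) :
    ent μ (fun ω => g (X ω)) ≤ ent μ X := by
  rw [ent_eq_neg_sum_law, ent_eq_neg_sum_law, neg_le_neg_iff,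
    ← sum_fiberwise univ g (fun a => law μ X a * log (law μ X a))]
  refine sum_le_sum fun c _ => ?_
  rw [law_comp, sum_mul]
  refine sum_le_sum fun a ha => ?_
  rcases (law_nonneg hμ0 X a).eq_or_lt with h0 | hpos
  · simp [← h0]
  · exact mul_le_mul_of_nonneg_left (log_le_log hpos
      (single_le_sum (fun b _ => law_nonneg hμ0 X b) ha)) hpos.le

theorem ent_le_of_comp (hμ0 : ∀ ω, 0 ≤ μ ω) {Y : Ω → γ} (X : Ω → α) (g : α → γ)
    (hg : ∀ ω, g (X ω) = Y ω) : ent μ Y ≤ ent μ X :=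
  funext hg ▸ ent_comp_le hμ0 X g

theorem ent_congr (hμ0 : ∀ ω, 0 ≤ μ ω) {X : Ω → α} {Y : Ω → γ} (f : α → γ) (f' : γ → α)
    (hf : ∀ ω, f (X ω) = Y ω) (hf' : ∀ ω, f' (Y ω) = X ω) : ent μ X = ent μ Y :=
  le_antisymm (ent_le_of_comp hμ0 Y f' hf') (ent_le_of_comp hμ0 X f hf)

theorem ent_le_ent_add_condEnt (hμ0 : ∀ ω, 0 ≤ μ ω) (U : Ω → α) (V : Ω → γ) :
    ent μ U ≤ ent μ V + condEnt μ U V := by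
  have := ent_le_of_comp hμ0 (fun ω => (U ω, V ω)) Prod.fst fun _ => rfl
  rw [condEnt]
  linarith

theorem condEnt_nonneg (hμ0 : ∀ ω, 0 ≤ μ ω) (U : Ω → α) (V : Ω → γ) : 0 ≤ condEnt μ U V := by
  have := ent_le_of_comp hμ0 (fun ω => (U ω, V ω)) Prod.snd fun _ => rfl
  rw [condEnt]
  linarith

theorem condEnt_pair_eq (hμ0 : ∀ ω, 0 ≤ μ ω) (U : Ω → α) (V : Ω → γ) (C : Ω → δ) :
    condEnt μ (fun ω => (U ω, V ω)) C = condEnt μ V C + condEnt μ U (fun ω => (V ω, C ω)) := by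
  have := ent_congr (μ := μ) hμ0 (X := fun ω => ((U ω, V ω), C ω))
    (fun p => (p.1.1, p.1.2, p.2)) (fun p => ((p.1, p.2.1), p.2.2)) (fun _ => rfl) (fun _ => rfl)
  simp only [condEnt]
  linarith

theorem condEnt_le_of_comp_left (hμ0 : ∀ ω, 0 ≤ μ ω) {Y : Ω → δ} (Z : Ω → α) (C : Ω → γ)
    (f : α → δ) (hf : ∀ ω, f (Z ω) = Y ω) : condEnt μ Y C ≤ condEnt μ Z C := by
  have := ent_le_of_comp hμ0 (fun ω => (Z ω, C ω)) (fun p => (f p.1, p.2)) fun ω => by rw [hf]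
  simp only [condEnt]
  linarith

theorem condEnt_eq_sum (μ : Ω → ℝ) (U : Ω → α) (V : Ω → γ) :
    condEnt μ U V = ∑ u, ∑ v, law μ (fun ω => (U ω, V ω)) (u, v) *
      (log (law μ V v) - log (law μ (fun ω => (U ω, V ω)) (u, v))) := by
  rw [sum_comm]
  simp only [mul_sub, sum_sub_distrib, ← sum_mul, ← law_eq_sum_law_pair]
  rw [condEnt, ent_eq_neg_sum_law, ent_eq_neg_sum_law, Fintype.sum_prod_type, sum_comm]
  ring

theorem condEnt_le_of_comp (hμ0 : ∀ ω, 0 ≤ μ ω) (U : Ω → α) (V : Ω → γ) {W : Ω → δ}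
    (g : γ → δ) (hg : ∀ ω, g (V ω) = W ω) : condEnt μ U V ≤ condEnt μ U W := by
  obtain rfl : (fun ω => g (V ω)) = W := funext hg
  rw [condEnt_eq_sum, condEnt_eq_sum]
  refine sum_le_sum fun u _ => ?_
  rw [← sum_fiberwise univ g]
  refine sum_le_sum fun w _ => ?_
  rw [law_pair_comp, law_comp]
  refine sum_mul_log_sub_log_le _ (fun v _ => law_nonneg hμ0 _ _) fun v _ => ?_
  rw [law_eq_sum_law_pair μ U V]
  exact single_le_sum (fun u' _ => law_nonneg hμ0 _ (u', v)) (mem_univ u)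

theorem condEnt_le_ent (hμ0 : ∀ ω, 0 ≤ μ ω) (hμ1 : ∑ ω, μ ω = 1) (U : Ω → α) (V : Ω → γ) :
    condEnt μ U V ≤ ent μ U := by
  have hunit : ent μ (fun _ => ()) = 0 := by
    have : law μ (fun _ => ()) () = 1 := by simpa [law] using hμ1
    simp [ent_eq_neg_sum_law, this]
  have hpair : ent μ (fun ω => (U ω, ())) = ent μ U :=
    ent_congr hμ0 Prod.fst (fun u => (u, ())) (fun _ => rfl) (fun _ => rfl)
  calc condEnt μ U V ≤ condEnt μ U (fun _ => ()) :=
        condEnt_le_of_comp hμ0 U V (fun _ => ()) fun _ => rfl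
    _ = ent μ U := by rw [condEnt, hunit, hpair, sub_zero]

theorem condEnt_le_condEnt_add_condEnt (hμ0 : ∀ ω, 0 ≤ μ ω) (U : Ω → α) (T : Ω → γ)
    (W : Ω → δ) : condEnt μ U W ≤ condEnt μ U T + condEnt μ T W :=
  calc condEnt μ U W ≤ condEnt μ (fun ω => (U ω, T ω)) W :=
        condEnt_le_of_comp_left hμ0 _ W Prod.fst fun _ => rfl
    _ = condEnt μ T W + condEnt μ U (fun ω => (T ω, W ω)) := condEnt_pair_eq hμ0 U T W
    _ ≤ condEnt μ T W + condEnt μ U T := by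
        gcongr; exact condEnt_le_of_comp hμ0 U _ Prod.fst fun _ => rfl
    _ = condEnt μ U T + condEnt μ T W := add_comm _ _

theorem condEnt_eq_ent_sub_mutInfo (μ : Ω → ℝ) (U : Ω → α) (T : Ω → γ) :
    condEnt μ U T = ent μ U - mutInfo μ U T := by
  rw [condEnt, mutInfo]; ring

theorem condEnt_const_left (hμ0 : ∀ ω, 0 ≤ μ ω) (C : Ω → γ) (a : α) :
    condEnt μ (fun _ => a) C = 0 := by
  rw [condEnt, ent_congr hμ0 Prod.snd (a, ·) (fun _ => rfl) (fun _ => rfl), sub_self]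

section Family

variable {ι β : Type*} [Fintype ι] [DecidableEq ι] [Fintype β] [DecidableEq β]

theorem condEnt_subfamily_empty (hμ0 : ∀ ω, 0 ≤ μ ω) (Y : ι → Ω → β) (C : Ω → γ) :
    condEnt μ (subfamily ∅ Y) C = 0 := by
  have : subfamily ∅ Y = fun _ _ => none := by ext; simp [subfamily]
  rw [this, condEnt_const_left hμ0]

theorem condEnt_subfamily_insert_le (hμ0 : ∀ ω, 0 ≤ μ ω) (Y : ι → Ω → β) (C : Ω → γ)
    (a : ι) (s : Finset ι) :
    condEnt μ (subfamily (insert a s) Y) C ≤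
      condEnt μ (subfamily s Y) C + condEnt μ (Y a) (fun ω => (subfamily s Y ω, C ω)) :=
  calc condEnt μ (subfamily (insert a s) Y) C
      ≤ condEnt μ (fun ω => (Y a ω, subfamily s Y ω)) C :=
        condEnt_le_of_comp_left hμ0 _ C (fun p j => if j = a then some p.1 else p.2 j)
          fun ω => by ext j; by_cases h : j = a <;> simp [subfamily, h]
    _ = _ := condEnt_pair_eq hμ0 _ _ _

theorem condEnt_subfamily_le_sum (hμ0 : ∀ ω, 0 ≤ μ ω) (Y : ι → Ω → β) (C : Ω → γ)
    (s : Finset ι) : condEnt μ (subfamily s Y) C ≤ ∑ i ∈ s, condEnt μ (Y i) C := by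
  induction s using Finset.induction_on with
  | empty => rw [condEnt_subfamily_empty hμ0, sum_empty]
  | insert a s ha ih =>
    rw [sum_insert ha]
    have := condEnt_le_of_comp hμ0 (Y a) (fun ω => (subfamily s Y ω, C ω)) Prod.snd fun _ => rfl
    linarith [condEnt_subfamily_insert_le hμ0 Y C a s]

theorem condEnt_subfamily_le_sum_condEnt_suffix [LinearOrder ι] (hμ0 : ∀ ω, 0 ≤ μ ω)
    (Y : ι → Ω → β) (C : Ω → γ) (s : Finset ι) :
    condEnt μ (subfamily s Y) C ≤
      ∑ i ∈ s, condEnt μ (Y i) (fun ω => (subfamily (s.filter (i < ·)) Y ω, C ω)) := by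
  induction s using Finset.induction_on_min with
  | empty => rw [condEnt_subfamily_empty hμ0, sum_empty]
  | insert a s ha ih =>
    have hsuffix : (insert a s).filter (a < ·) = s := by
      rw [filter_insert, if_neg (lt_irrefl a)]
      exact filter_true_of_mem ha
    have hsuffix' : ∀ i ∈ s, (insert a s).filter (i < ·) = s.filter (i < ·) := fun i hi => by
      rw [filter_insert, if_neg (ha i hi).asymm]
    rw [sum_insert fun h => lt_irrefl a (ha a h), hsuffix, sum_congr rfl fun i hi => by
      rw [hsuffix' i hi]]
    linarith [condEnt_subfamily_insert_le hμ0 Y C a s]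

theorem condEnt_subfamily_eq_zero [Inhabited β] (hμ0 : ∀ ω, 0 ≤ μ ω) {Y Y' : ι → Ω → β}
    {X : Ω → γ} (hdet : ∀ k, condEnt μ (Y' k) (fun ω => (Y k ω, X ω)) = 0) (s : Finset ι) :
    condEnt μ (subfamily s Y') (fun ω => (subfamily s Y ω, X ω)) = 0 := by
  refine le_antisymm ?_ (condEnt_nonneg hμ0 _ _)
  refine (condEnt_subfamily_le_sum hμ0 Y' _ s).trans (sum_nonpos fun k hk => ?_)
  rw [← hdet k]
  exact condEnt_le_of_comp hμ0 _ _ (fun p => ((p.1 k).getD default, p.2))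
    fun ω => by simp [subfamily, hk]

theorem condEnt_le_ent_sub_mutInfo_of_determined [Inhabited β] (hμ0 : ∀ ω, 0 ≤ μ ω)
    {Y Y' : ι → Ω → β} {X : Ω → γ} (hdet : ∀ k, condEnt μ (Y' k) (fun ω => (Y k ω, X ω)) = 0)
    (U : Ω → α) (s : Finset ι) :
    condEnt μ U (fun ω => (subfamily s Y ω, X ω)) ≤ ent μ U - mutInfo μ U (subfamily s Y') :=
  calc condEnt μ U (fun ω => (subfamily s Y ω, X ω))
      ≤ condEnt μ U (subfamily s Y') +
          condEnt μ (subfamily s Y') (fun ω => (subfamily s Y ω, X ω)) :=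
        condEnt_le_condEnt_add_condEnt hμ0 _ _ _
    _ = ent μ U - mutInfo μ U (subfamily s Y') := by
        rw [condEnt_subfamily_eq_zero hμ0 hdet, add_zero, condEnt_eq_ent_sub_mutInfo]

theorem ent_le_add_sum_ent_sub_mutInfo [LinearOrder ι] [Inhabited β] (hμ0 : ∀ ω, 0 ≤ μ ω)
    (hμ1 : ∑ ω, μ ω = 1) {A : Ω → α} {X : Ω → γ} {Y Y' : ι → Ω → β}
    (hA : condEnt μ A (subfamily univ Y) = 0)
    (hdet : ∀ k, condEnt μ (Y' k) (fun ω => (Y k ω, X ω)) = 0) (a : ι) :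
    ent μ A ≤ ent μ X + ent μ (Y a) +
      ∑ i ∈ univ.erase a, (ent μ (Y i) - mutInfo μ (Y i) (subfamily (univ.filter (i < ·)) Y')) :=
  calc ent μ A ≤ ent μ (subfamily univ Y) := by
        simpa [hA] using ent_le_ent_add_condEnt hμ0 A (subfamily univ Y)
    _ ≤ ent μ X + condEnt μ (subfamily univ Y) X := ent_le_ent_add_condEnt hμ0 _ _
    _ ≤ ent μ X + ∑ i, condEnt μ (Y i) (fun ω => (subfamily (univ.filter (i < ·)) Y ω, X ω)) := by
        gcongr; exact condEnt_subfamily_le_sum_condEnt_suffix hμ0 Y X univ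
    _ ≤ _ := by
        rw [← add_sum_erase _ _ (mem_univ a), ← add_assoc]
        gcongr with i
        · exact condEnt_le_ent hμ0 hμ1 (Y a) _
        · exact condEnt_le_ent_sub_mutInfo_of_determined hμ0 hdet (Y i) _

end Family

end FiniteEntropy

open FiniteEntropy

theorem stmt17_general {Ω αA αX β : Type} [Fintype Ω] [Fintype αA] [DecidableEq αA]
    [Fintype αX] [DecidableEq αX] [Fintype β] [DecidableEq β]
    (μ : Ω → ℝ) (hμ0 : ∀ ω, 0 ≤ μ ω) (hμ1 : ∑ ω, μ ω = 1)
    (n N : ℕ) (d R : ℝ) (hd : 0 < d)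
    (A : Ω → αA) (X : Ω → αX) (At At1 : Fin (n + 1) → Ω → β)
    (hA : ent μ A = N * d)
    (hX : ent μ X = R * d)
    (hentAt : ∀ k, ent μ (At k) = (N : ℝ) * d / (n + 1))
    (hjoint : condEnt μ A (fun ω => fun k : Fin (n + 1) => At k ω) = 0)
    (hdec : ∀ k, condEnt μ (At1 k) (fun ω => (At k ω, X ω)) = 0)
    (σ : Equiv.Perm (Fin (n + 1))) :
    ((N : ℝ) * d ≤ (N : ℝ) * d / (n + 1) + R * d +
      ∑ i ∈ Finset.univ.filter (fun i => i ≠ Fin.last n),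
        ((N : ℝ) * d / (n + 1) -
          mutInfo μ (At (σ i))
            (fun ω => fun j : Fin (n + 1) =>
              if i < j then some (At1 (σ j) ω) else none))) ∧
    R ≥ (1 / d) *
      ∑ i ∈ Finset.univ.filter (fun i => i ≠ Fin.last n),
        mutInfo μ (At (σ i))
          (fun ω => fun j : Fin (n + 1) =>
            if i < j then some (At1 (σ j) ω) else none) := by
  obtain ⟨ω₀⟩ : Nonempty Ω := univ_nonempty_iff.1 (nonempty_of_sum_ne_zero (hμ1 ▸ one_ne_zero))
  have : Inhabited β := ⟨At 0 ω₀⟩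
  have hjointσ : condEnt μ A (subfamily univ fun j => At (σ j)) = 0 :=
    le_antisymm (hjoint ▸ condEnt_le_of_comp hμ0 A _ (fun p k => (p (σ.symm k)).getD default)
      fun ω => by ext; simp [subfamily]) (condEnt_nonneg hμ0 _ _)
  have hsuffix : ∀ i, subfamily (univ.filter (i < ·)) (fun j => At1 (σ j)) =
      fun ω j => if i < j then some (At1 (σ j) ω) else none := fun i => by
    ext; simp [subfamily]
  have hfirst := ent_le_add_sum_ent_sub_mutInfo hμ0 hμ1 hjointσ (fun k => hdec (σ k)) (Fin.last n)
  simp only [hsuffix, hentAt, hA, hX, ← filter_ne'] at hfirst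
  refine ⟨by linarith, ?_⟩
  have hNd : (N : ℝ) * d / (n + 1) + ∑ i ∈ univ.filter (· ≠ Fin.last n), (N : ℝ) * d / (n + 1) =
      N * d := by
    rw [filter_ne', add_sum_erase _ (fun _ => (N : ℝ) * d / (n + 1)) (mem_univ _), sum_const,
      card_univ, Fintype.card_fin, nsmul_eq_mul, Nat.cast_add, Nat.cast_one,
      mul_div_cancel₀ _ (by positivity)]
  rw [sum_sub_distrib] at hfirst
  rw [ge_iff_le, one_div_mul_eq_div, div_le_iff₀ hd]
  linarith

/-- The entropy lower bound chain. For `K = n+1` workers: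
`H(A) = N·d`; message `X` with `H(X|A) = 0` and `H(X) = R·d`; batches
`A_1^t,…,A_K^t`, each of entropy `N·d/K`, deterministic functions of `A` which
jointly determine `A`; batches `A_j^{t+1}` (deterministic functions of `A`)
satisfying `H(A_j^{t+1} | A_j^t, X) = 0`. Then
`N·d ≤ N·d/K + R·d + ∑_{i=1}^{K-1} [N·d/K - I(A_{σ_i}^t ; (A_{σ_{i+1}}^{t+1},…,A_{σ_K}^{t+1}))]`
for any permutation `σ`, and hence
`R ≥ (1/d)·∑_{i=1}^{K-1} I(A_{σ_i}^t ; (A_{σ_{i+1}}^{t+1},…,A_{σ_K}^{t+1}))`. -/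
theorem stmt17 {Ω αA αX β : Type} [Fintype Ω] [Fintype αA] [DecidableEq αA]
    [Fintype αX] [DecidableEq αX] [Fintype β] [DecidableEq β]
    (μ : Ω → ℝ) (hμ0 : ∀ ω, 0 ≤ μ ω) (hμ1 : ∑ ω, μ ω = 1)
    (n N : ℕ) (d R : ℝ) (hd : 0 < d)
    (A : Ω → αA) (X : Ω → αX) (At At1 : Fin (n + 1) → Ω → β)
    (hA : ent μ A = N * d)
    (hXA : condEnt μ X A = 0)
    (hX : ent μ X = R * d)
    (hAtA : ∀ k, condEnt μ (At k) A = 0)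
    (hAt1A : ∀ k, condEnt μ (At1 k) A = 0)
    (hentAt : ∀ k, ent μ (At k) = (N : ℝ) * d / (n + 1))
    (hjoint : condEnt μ A (fun ω => fun k : Fin (n + 1) => At k ω) = 0)
    (hdec : ∀ k, condEnt μ (At1 k) (fun ω => (At k ω, X ω)) = 0)
    (σ : Equiv.Perm (Fin (n + 1))) :
    ((N : ℝ) * d ≤ (N : ℝ) * d / (n + 1) + R * d +
      ∑ i ∈ Finset.univ.filter (fun i => i ≠ Fin.last n),
        ((N : ℝ) * d / (n + 1) -
          mutInfo μ (At (σ i))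
            (fun ω => fun j : Fin (n + 1) =>
              if i < j then some (At1 (σ j) ω) else none))) ∧
    R ≥ (1 / d) *
      ∑ i ∈ Finset.univ.filter (fun i => i ≠ Fin.last n),
        mutInfo μ (At (σ i))
          (fun ω => fun j : Fin (n + 1) =>
            if i < j then some (At1 (σ j) ω) else none) :=
  stmt17_general μ hμ0 hμ1 n N d R hd A X At At1 hA hX hentAt hjoint hdec σ
end
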